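/- arXiv:1304.6321 — 8 statements merged into one kernel-verified Lean document; each statement's English description precedes it below -/
import Mathlib

section
/- Let (T, B) be a tree decomposition of a finite graph G and let S ⊆ V(G). Then there exists a node t of T such that every connected component of G − B_t contains at most |S|/2 vertices of S. -/
/-!
Suppose no bag is balanced, so every node `t` has a component `C_t` of `G - B_t` carrying more
than half of `S`; any two such heavy components meet. All bags meeting `C_t` lie in one
component of `T - t`, entered through a neighbour `t'`. A vertex of `B_t` adjacent to `C_t`
shares a bag with `C_t`, so by the subtree property it also lies in `B_{t'}`; hence a component
of `G - B_{t'}` meeting `C_t` cannot leave it, and `C_{t'} ⊆ C_t`. Take `C_t` of minimal size;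
then `C_{t'} = C_t`, and `t'` is strictly closer than `t` to a fixed bag meeting `C_t`.
Minimising that distance as well gives a contradiction; no finiteness of `T` is needed.
-/

open SimpleGraph

/-- `(T, bag)` is a tree decomposition of the graph `G`. -/
def IsTreeDecomp {V ι : Type} (G : SimpleGraph V) (T : SimpleGraph ι) (bag : ι → Set V) : Prop :=
  T.IsTree ∧
  (∀ v, ∃ i, v ∈ bag i) ∧
  (∀ u v, G.Adj u v → ∃ i, u ∈ bag i ∧ v ∈ bag i) ∧
  (∀ v : V, (T.induce {i | v ∈ bag i}).Connected)

/-- `G` has treewidth at most `k`: it has a tree decomposition all of whose bags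
have at most `k + 1` vertices. -/
def TreewidthAtMost {V : Type} (G : SimpleGraph V) (k : ℕ) : Prop :=
  ∃ (ι : Type) (T : SimpleGraph ι) (bag : ι → Set V),
    IsTreeDecomp G T bag ∧ ∀ i, (bag i).ncard ≤ k + 1

/-- Every connected component of `G − X` contains at most `|S|/2` vertices of `S`. -/
def BalancedSSep {V : Type} (G : SimpleGraph V) (S X : Set V) : Prop :=
  ∀ c : (G.induce Xᶜ).ConnectedComponent,
    2 * ((Subtype.val '' c.supp) ∩ S).ncard ≤ S.ncard

namespace SimpleGraph

section Walks

variable {V : Type*} {G : SimpleGraph V}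

lemma Reachable.exists_walk_of_induce {s : Set V} {u v : s} (h : (G.induce s).Reachable u v) :
    ∃ w : G.Walk u v, ∀ x ∈ w.support, x ∈ s := by
  obtain ⟨w⟩ := h
  refine ⟨w.map (Embedding.induce s).toHom, fun x hx => ?_⟩
  obtain ⟨a, -, rfl⟩ := List.mem_map.1 (Walk.support_map _ _ ▸ hx)
  exact a.2

def ReachableAvoiding (G : SimpleGraph V) (t i j : V) : Prop :=
  ∃ w : G.Walk i j, t ∉ w.support

namespace ReachableAvoiding

variable {t i j k : V}

lemma symm (h : G.ReachableAvoiding t i j) : G.ReachableAvoiding t j i := by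
  obtain ⟨w, hw⟩ := h
  exact ⟨w.reverse, by simpa using hw⟩

lemma trans (h : G.ReachableAvoiding t i j) (h' : G.ReachableAvoiding t j k) :
    G.ReachableAvoiding t i k := by
  obtain ⟨w, hw⟩ := h
  obtain ⟨w', hw'⟩ := h'
  exact ⟨w.append w', by simp [Walk.mem_support_append_iff, hw, hw']⟩

end ReachableAvoiding

lemma Connected.exists_adj_reachableAvoiding_dist_lt (hG : G.Connected) {t j : V} (h : t ≠ j) :
    ∃ t', G.Adj t t' ∧ G.ReachableAvoiding t t' j ∧ G.dist t' j < G.dist t j := by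
  obtain ⟨p, hp, hlen⟩ := hG.exists_path_of_dist t j
  cases p with
  | nil => exact absurd rfl h
  | cons hadj q =>
    refine ⟨_, hadj, ⟨q, ((Walk.cons_isPath_iff _ _).1 hp).2⟩, ?_⟩
    have := dist_le q
    rw [Walk.length_cons] at hlen
    omega

lemma IsAcyclic.eq_of_adj_of_reachableAvoiding (hG : G.IsAcyclic) {t y y' : V}
    (hy : G.Adj t y) (hy' : G.Adj t y') (h : G.ReachableAvoiding t y y') : y = y' := by
  obtain ⟨w, hw⟩ := h
  have hbridge := isBridge_iff_forall_walk_mem_edges.1 (isAcyclic_iff_forall_adj_isBridge.1 hG hy')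
  rcases List.mem_cons.1 (hbridge (.cons hy w)) with he | he
  · exact Sym2.congr_right.1 he.symm
  · exact absurd (w.fst_mem_support_of_mem_edges he) hw

lemma IsAcyclic.mem_of_adj_of_reachableAvoiding (hG : G.IsAcyclic) {s : Set V}
    (hs : (G.induce s).Preconnected) {t t' m : V} (ht : t ∈ s) (hm : m ∈ s) (hadj : G.Adj t t')
    (h : G.ReachableAvoiding t t' m) : t' ∈ s := by
  classical
  obtain ⟨w, hw⟩ := (hs ⟨t, ht⟩ ⟨m, hm⟩).exists_walk_of_induce
  have hpath := w.bypass_isPath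
  have hsupp : ∀ x ∈ w.bypass.support, x ∈ s :=
    fun x hx => hw x (w.support_bypass_subset_support hx)
  generalize w.bypass = p at hpath hsupp
  cases p with
  | nil =>
    obtain ⟨q, hq⟩ := h
    exact absurd q.end_mem_support hq
  | cons hy q =>
    have hq : t ∉ q.support := ((Walk.cons_isPath_iff _ _).1 hpath).2
    obtain rfl := hG.eq_of_adj_of_reachableAvoiding hy hadj
      (ReachableAvoiding.trans ⟨q, hq⟩ h.symm)
    exact hsupp _ (by simp)

end Walks

namespace ConnectedComponent

variable {V : Type*} {G : SimpleGraph V} {X : Set V} (c : (G.induce X).ConnectedComponent)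

lemma exists_walk_of_mem_image_supp {u v : V} (hu : u ∈ Subtype.val '' c.supp)
    (hv : v ∈ Subtype.val '' c.supp) : ∃ w : G.Walk u v, ∀ x ∈ w.support, x ∈ X := by
  obtain ⟨u, hu, rfl⟩ := hu
  obtain ⟨v, hv, rfl⟩ := hv
  exact (ConnectedComponent.exact (hu.trans hv.symm)).exists_walk_of_induce

lemma mem_image_supp_of_adj {u y : V} (hu : u ∈ Subtype.val '' c.supp) (hadj : G.Adj u y)
    (hy : y ∈ X) : y ∈ Subtype.val '' c.supp := by
  obtain ⟨u, hu, rfl⟩ := hu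
  refine ⟨⟨y, hy⟩, ?_, rfl⟩
  rw [mem_supp_iff] at hu ⊢
  rw [← hu]
  exact ConnectedComponent.sound (induce_adj.2 hadj).reachable.symm

lemma mem_image_supp_of_walk {Y : Set V}
    (hbd : ∀ u ∈ Subtype.val '' c.supp, ∀ y, G.Adj u y → y ∈ Y → y ∈ X) {u v : V}
    (w : G.Walk u v) (hw : ∀ x ∈ w.support, x ∈ Y) (hu : u ∈ Subtype.val '' c.supp) :
    v ∈ Subtype.val '' c.supp := by
  induction w with
  | nil => exact hu
  | cons hadj w ih =>
    exact ih (fun x hx => hw x (by simp [hx]))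
      (c.mem_image_supp_of_adj hu hadj (hbd _ hu _ hadj (hw _ (by simp))))

lemma image_supp_subset_of_forall_adj {Y : Set V}
    (hbd : ∀ u ∈ Subtype.val '' c.supp, ∀ y, G.Adj u y → y ∈ Y → y ∈ X)
    (c' : (G.induce Y).ConnectedComponent)
    (hmeet : (Subtype.val '' c.supp ∩ Subtype.val '' c'.supp).Nonempty) :
    Subtype.val '' c'.supp ⊆ Subtype.val '' c.supp := by
  obtain ⟨v₀, hv₀, hv₀'⟩ := hmeet
  intro x hx
  obtain ⟨w, hw⟩ := c'.exists_walk_of_mem_image_supp hv₀' hx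
  exact c.mem_image_supp_of_walk hbd w hw hv₀

end ConnectedComponent

end SimpleGraph

lemma Set.inter_nonempty_of_lt_two_mul_ncard_inter {α : Type*} {S A B : Set α} (hS : S.Finite)
    (hA : S.ncard < 2 * (A ∩ S).ncard) (hB : S.ncard < 2 * (B ∩ S).ncard) :
    (A ∩ B).Nonempty := by
  by_contra hAB
  have hdisj : Disjoint (A ∩ S) (B ∩ S) :=
    Set.disjoint_left.2 fun x hxA hxB => hAB ⟨x, hxA.1, hxB.1⟩
  have hunion := Set.ncard_union_eq hdisj (hS.subset Set.inter_subset_right)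
    (hS.subset Set.inter_subset_right)
  have hle : (A ∩ S ∪ B ∩ S).ncard ≤ S.ncard :=
    Set.ncard_le_ncard (Set.union_subset Set.inter_subset_right Set.inter_subset_right) hS
  omega

def IsHeavyComponent {V : Type} (G : SimpleGraph V) (S X A : Set V) : Prop :=
  ∃ c : (G.induce Xᶜ).ConnectedComponent,
    Subtype.val '' c.supp = A ∧ S.ncard < 2 * (A ∩ S).ncard

namespace IsHeavyComponent

variable {V : Type} {G : SimpleGraph V} {S X A : Set V}

lemma exists_of_not_balancedSSep (h : ¬ BalancedSSep G S X) : ∃ A, IsHeavyComponent G S X A := by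
  simp only [BalancedSSep, not_forall, not_le] at h
  obtain ⟨c, hc⟩ := h
  exact ⟨_, c, rfl, hc⟩

lemma subset_compl (h : IsHeavyComponent G S X A) : A ⊆ Xᶜ := by
  obtain ⟨c, rfl, -⟩ := h
  exact Subtype.coe_image_subset _ _

lemma inter_nonempty (h : IsHeavyComponent G S X A) : (A ∩ S).Nonempty := by
  obtain ⟨-, -, h⟩ := h
  exact Set.nonempty_of_ncard_ne_zero (by omega)

end IsHeavyComponent

namespace IsTreeDecomp

variable {V ι : Type} {G : SimpleGraph V} {T : SimpleGraph ι} {bag : ι → Set V}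

lemma reachableAvoiding_of_mem_bag (hdec : IsTreeDecomp G T bag) {v : V} {t i j : ι}
    (hv : v ∉ bag t) (hi : v ∈ bag i) (hj : v ∈ bag j) : T.ReachableAvoiding t i j := by
  obtain ⟨w, hw⟩ := ((hdec.2.2.2 v).preconnected ⟨i, hi⟩ ⟨j, hj⟩).exists_walk_of_induce
  exact ⟨w, fun ht => hv (hw t ht)⟩

lemma reachableAvoiding_of_walk (hdec : IsTreeDecomp G T bag) {u v : V} {t i j : ι}
    (w : G.Walk u v) (hw : ∀ x ∈ w.support, x ∉ bag t) (hi : u ∈ bag i) (hj : v ∈ bag j) :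
    T.ReachableAvoiding t i j := by
  induction w generalizing i with
  | nil => exact hdec.reachableAvoiding_of_mem_bag (hw _ (by simp)) hi hj
  | cons hadj w ih =>
    obtain ⟨m, hum, hym⟩ := hdec.2.2.1 _ _ hadj
    exact (hdec.reachableAvoiding_of_mem_bag (hw _ (by simp)) hi hum).trans
      (ih (fun x hx => hw x (by simp [hx])) hym hj)

lemma subset_of_isHeavyComponent_of_adj [Finite V] (hdec : IsTreeDecomp G T bag) {S A B : Set V}
    {t t' j : ι} {v : V} (hA : IsHeavyComponent G S (bag t) A)
    (hB : IsHeavyComponent G S (bag t') B) (hv : v ∈ A) (hvj : v ∈ bag j) (hadj : T.Adj t t')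
    (h : T.ReachableAvoiding t t' j) : B ⊆ A := by
  obtain ⟨c, rfl, hc⟩ := hA
  obtain ⟨c', rfl, hc'⟩ := hB
  refine c.image_supp_subset_of_forall_adj (Y := (bag t')ᶜ)
    (fun u hu y huy hyt' hyt => hyt' ?_) c'
    (Set.inter_nonempty_of_lt_two_mul_ncard_inter S.toFinite hc hc')
  obtain ⟨m, hum, hym⟩ := hdec.2.2.1 u y huy
  obtain ⟨w, hw⟩ := c.exists_walk_of_mem_image_supp hv hu
  exact hdec.1.isAcyclic.mem_of_adj_of_reachableAvoiding (hdec.2.2.2 y).preconnected hyt hym hadj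
    (h.trans (hdec.reachableAvoiding_of_walk w hw hvj hum))

end IsTreeDecomp

theorem statement1 {V ι : Type} [Fintype V] (G : SimpleGraph V) (T : SimpleGraph ι)
    (bag : ι → Set V) (hdec : IsTreeDecomp G T bag) (S : Set V) :
    ∃ t : ι, BalancedSSep G S (bag t) := by
  by_contra! hbad
  have hheavy (t : ι) : ∃ A, IsHeavyComponent G S (bag t) A :=
    IsHeavyComponent.exists_of_not_balancedSSep (hbad t)
  obtain ⟨t₀⟩ := hdec.1.connected.nonempty
  obtain ⟨A₀, hA₀⟩ := hheavy t₀
  obtain ⟨⟨t₁, A⟩, hA⟩ := exists_minimalFor_of_wellFoundedLT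
    (fun p : ι × Set V => IsHeavyComponent G S (bag p.1) p.2) (fun p => p.2.ncard)
    ⟨(t₀, A₀), hA₀⟩
  have hA₁ : IsHeavyComponent G S (bag t₁) A := hA.prop
  obtain ⟨v, hvA, -⟩ := hA₁.inter_nonempty
  obtain ⟨j, hvj⟩ := hdec.2.1 v
  obtain ⟨t, ht⟩ := exists_minimalFor_of_wellFoundedLT
    (fun t => IsHeavyComponent G S (bag t) A) (T.dist · j) ⟨_, hA₁⟩
  have htj : t ≠ j := fun h => ht.prop.subset_compl hvA (h ▸ hvj)
  obtain ⟨t', hadj, hav, hlt⟩ := hdec.1.connected.exists_adj_reachableAvoiding_dist_lt htj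
  obtain ⟨B, hB⟩ := hheavy t'
  have hBA : B = A := Set.eq_of_subset_of_ncard_le
    (hdec.subset_of_isHeavyComponent_of_adj ht.prop hB hvA hvj hadj hav)
    (hA.le (j := (t', B)) hB)
  exact ht.not_lt (hBA ▸ hB) hlt
end

section
/- Let G be a finite graph and k ∈ ℕ, and let G_I be the improved graph of G with respect to k. Then tw(G) ≤ k if and only if tw(G_I) ≤ k. -/
/-!
If a tree decomposition of width at most `k` had no bag containing both `u` and `v`, take the
last edge `i' i` leaving the subtree of `u` on a walk towards the subtree of `v`. It is a bridge
separating the two subtrees, and the subtree of every common neighbour `w` meets both of them,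
so it contains `i'`. The bag at `i'` then holds `u` together with all common neighbours of `u`
and `v`, which is more than `k + 1` vertices as soon as there are `k + 1` such neighbours.
-/

open SimpleGraph

/-- The improved graph of `G` with respect to `k`: add an edge between each pair of
distinct vertices having at least `k + 1` common neighbors of degree at most `k` in `G`. -/
def improvedGraph {V : Type} [Fintype V] (G : SimpleGraph V) [DecidableRel G.Adj] (k : ℕ) :
    SimpleGraph V where
  Adj u v := u ≠ v ∧ (G.Adj u v ∨
    k + 1 ≤ ({w | G.Adj u w ∧ G.Adj v w ∧ G.degree w ≤ k} : Set V).ncard)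
  symm := ⟨by
    intro u v h
    obtain ⟨hne, h⟩ := h
    refine ⟨hne.symm, ?_⟩
    rcases h with h | h
    · exact Or.inl h.symm
    · right
      have hset : ({w | G.Adj v w ∧ G.Adj u w ∧ G.degree w ≤ k} : Set V)
          = {w | G.Adj u w ∧ G.Adj v w ∧ G.degree w ≤ k} := by
        ext w
        constructor <;> rintro ⟨h1, h2, h3⟩ <;> exact ⟨h2, h1, h3⟩
      rw [hset]
      exact h⟩
  loopless := ⟨fun u h => h.1 rfl⟩

namespace SimpleGraph

variable {ι : Type*} {T : SimpleGraph ι}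

lemma Walk.exists_last_boundary_adj {S : Set ι} {b a : ι} (p : T.Walk b a) (hb : b ∉ S)
    (ha : a ∈ S) :
    ∃ i' i, T.Adj i' i ∧ i' ∈ S ∧ ∃ q : T.Walk i b, ∀ z ∈ q.support, z ∉ S := by
  induction p with
  | nil => exact absurd ha hb
  | @cons b c a hbc p ih =>
    by_cases hc : c ∈ S
    · exact ⟨c, b, hbc.symm, hc, .nil, by simpa using hb⟩
    · obtain ⟨i', i, hadj, hi', q, hq⟩ := ih hc ha
      refine ⟨i', i, hadj, hi', q.concat hbc.symm, ?_⟩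
      simp only [Walk.support_concat, List.mem_append, List.mem_singleton]
      rintro z (hz | rfl)
      exacts [hq z hz, hb]

lemma reachable_deleteEdges_of_preconnected_induce {S : Set ι} (hS : (T.induce S).Preconnected)
    {x y a b : ι} (hx : x ∈ S) (hy : y ∈ S) (ha : a ∉ S) :
    (T.deleteEdges {s(a, b)}).Reachable x y := by
  let f : T.induce S →g T.deleteEdges {s(a, b)} :=
    { toFun := Subtype.val
      map_rel' := fun {p q} h => deleteEdges_adj.mpr ⟨h, fun he => by
        rw [Set.mem_singleton_iff, Sym2.eq_iff] at he
        rcases he with ⟨rfl, -⟩ | ⟨-, rfl⟩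
        exacts [ha p.2, ha q.2]⟩ }
  exact (hS ⟨x, hx⟩ ⟨y, hy⟩).map f

end SimpleGraph

section TreeDecomposition

variable {V ι : Type} {G H : SimpleGraph V} {T : SimpleGraph ι} {bag : ι → Set V}

lemma IsTreeDecomp.anti (hGH : G ≤ H) (hd : IsTreeDecomp H T bag) : IsTreeDecomp G T bag :=
  let ⟨htree, hcover, hedge, hconn⟩ := hd
  ⟨htree, hcover, fun u v huv => hedge u v (hGH huv), hconn⟩

lemma TreewidthAtMost.anti {k : ℕ} (hGH : G ≤ H) :
    TreewidthAtMost H k → TreewidthAtMost G k :=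
  fun ⟨ι, T, bag, hd, hw⟩ => ⟨ι, T, bag, hd.anti hGH, hw⟩

lemma IsTreeDecomp.exists_bag_insert_commonNeighbors_subset (hd : IsTreeDecomp G T bag)
    {u v : V} (huv : ∀ i, u ∈ bag i → v ∉ bag i) :
    ∃ i, insert u (G.commonNeighbors u v) ⊆ bag i := by
  obtain ⟨htree, hcover, hedge, hsub⟩ := hd
  obtain ⟨a, ha⟩ := hcover u
  obtain ⟨b, hb⟩ := hcover v
  obtain ⟨p⟩ := htree.connected.preconnected b a
  obtain ⟨i', i, hadj, hui', q, hq⟩ :=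
    p.exists_last_boundary_adj (S := {j | u ∈ bag j}) (huv b · hb) ha
  have hbridge := isBridge_iff.mp (isAcyclic_iff_forall_adj_isBridge.mp htree.isAcyclic hadj)
  -- `q` avoids the subtree of `u`, so the subtree of `v` lies on the `i`-side of the bridge.
  have hib : (T.deleteEdges {s(i', i)}).Reachable i b :=
    reachable_deleteEdges_of_preconnected_induce q.connected_induce_support.preconnected
      q.start_mem_support q.end_mem_support (hq i' · hui')
  refine ⟨i', Set.insert_subset hui' fun w ⟨huw, hvw⟩ => ?_⟩
  obtain ⟨x, hux, hwx⟩ := hedge u w huw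
  obtain ⟨y, hvy, hwy⟩ := hedge v w hvw
  by_contra hwi'
  have hxi' : (T.deleteEdges {s(i', i)}).Reachable x i' := by
    rw [Sym2.eq_swap]
    exact reachable_deleteEdges_of_preconnected_induce (hsub u).preconnected hux hui'
      (hq i q.start_mem_support)
  have hyb := reachable_deleteEdges_of_preconnected_induce (b := i) (hsub v).preconnected hvy hb
    (huv i' hui')
  have hxy := reachable_deleteEdges_of_preconnected_induce (b := i) (hsub w).preconnected hwx hwy
    hwi'
  exact hbridge (hxi'.symm.trans (hxy.trans (hyb.trans hib.symm)))

lemma IsTreeDecomp.exists_bag_of_le_ncard_commonNeighbors [Finite V] {k : ℕ}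
    (hd : IsTreeDecomp G T bag) (hw : ∀ i, (bag i).ncard ≤ k + 1) {u v : V}
    (huv : k + 1 ≤ (G.commonNeighbors u v).ncard) : ∃ i, u ∈ bag i ∧ v ∈ bag i := by
  by_contra! h
  obtain ⟨i, hi⟩ := hd.exists_bag_insert_commonNeighbors_subset h
  have hcard := Set.ncard_le_ncard hi (Set.toFinite _)
  rw [Set.ncard_insert_of_notMem (G.notMem_commonNeighbors_left u v)] at hcard
  linarith [hw i]

lemma le_improvedGraph [Fintype V] [DecidableRel G.Adj] (k : ℕ) : G ≤ improvedGraph G k :=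
  fun _ _ h => ⟨h.ne, Or.inl h⟩

lemma IsTreeDecomp.improvedGraph_of_ncard_le [Fintype V] [DecidableRel G.Adj] {k : ℕ}
    (hd : IsTreeDecomp G T bag) (hw : ∀ i, (bag i).ncard ≤ k + 1) :
    IsTreeDecomp (improvedGraph G k) T bag := by
  refine ⟨hd.1, hd.2.1, ?_, hd.2.2.2⟩
  rintro u v ⟨-, hadj | hcard⟩
  · exact hd.2.2.1 u v hadj
  · refine hd.exists_bag_of_le_ncard_commonNeighbors hw (hcard.trans (Set.ncard_le_ncard ?_))
    exact fun w ⟨hu, hv, _⟩ => ⟨hu, hv⟩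

end TreeDecomposition

theorem statement4 {V : Type} [Fintype V] (G : SimpleGraph V) [DecidableRel G.Adj] (k : ℕ) :
    TreewidthAtMost G k ↔ TreewidthAtMost (improvedGraph G k) k :=
  ⟨fun ⟨ι, T, bag, hd, hw⟩ => ⟨ι, T, bag, hd.improvedGraph_of_ncard_le hw, hw⟩,
    TreewidthAtMost.anti (le_improvedGraph k)⟩
end

section
/- Let G be a finite graph and S ⊆ V(G). A set X ⊆ V(G) is a balanced S-separator of G if and only if there exists a partition (M_1, M_2, M_3) of V(G) ∖ X such that no edge of G joins a vertex of M_i to a vertex of M_j for i ≠ j, and |M_i ∩ S| ≤ |S|/2 for each i = 1, 2, 3. -/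
/-!
A component of `G - X` is connected and no edge joins two different `Mᵢ`, so it lies inside a
single `Mᵢ` and meets `S` in at most `|S|/2` vertices.

Conversely, the components carry `S`-weights of at most `|S|/2` each and at most `|S|` in total,
and such weights always fit into three bins of weight at most `|S|/2`: if the total exceeds
`|S|/2`, take a smallest collection `u` of weight more than `|S|/2` and an item `a ∈ u`; then
`u \ {a}`, `{a}` and the complement of `u` are the bins (the first by minimality of `u`, the
last because the total is at most `|S|`). The sets `Mᵢ` are the unions of the components in
the three bins.
-/

open SimpleGraph

theorem exists_fin_three_forall_two_mul_sum_fiber_le {ι : Type*} [Fintype ι] (w : ι → ℕ) {T : ℕ}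
    (hw : ∀ i, 2 * w i ≤ T) (hsum : ∑ i, w i ≤ T) :
    ∃ g : ι → Fin 3, ∀ k, 2 * ∑ i with g i = k, w i ≤ T := by
  classical
  by_cases hlight : 2 * ∑ i, w i ≤ T
  · refine ⟨fun _ ↦ 0, fun k ↦ ?_⟩
    by_cases hk : (0 : Fin 3) = k <;> simp [hk, hlight]
  push Not at hlight
  obtain ⟨u, hu, hmin⟩ := Finset.exists_min_image
    (Finset.univ.powerset.filter fun u ↦ T < 2 * ∑ i ∈ u, w i) Finset.card
    ⟨Finset.univ, by simpa using hlight⟩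
  simp only [Finset.mem_filter, Finset.mem_powerset, Finset.subset_univ, true_and] at hu hmin
  obtain ⟨a, ha⟩ : u.Nonempty := Finset.nonempty_iff_ne_empty.2 (by rintro rfl; simp at hu)
  have herase : 2 * ∑ i ∈ u.erase a, w i ≤ T := by
    by_contra! h
    have := hmin _ h
    rw [Finset.card_erase_of_mem ha] at this
    have := Finset.card_pos.2 ⟨a, ha⟩
    omega
  have hrest : 2 * ∑ i ∈ uᶜ, w i ≤ T := by
    have := Finset.sum_add_sum_compl u w
    omega
  refine ⟨fun i ↦ if i ∉ u then 2 else if i = a then 1 else 0, fun k ↦ ?_⟩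
  fin_cases k
  · convert herase using 3
    ext i; rcases eq_or_ne i a with rfl | hia <;> by_cases hi : i ∈ u <;> simp [*]
  · convert hw a using 2
    rw [Finset.sum_eq_single_of_mem a (by simp [ha]) (by intro i hi; aesop)]
  · convert hrest using 3
    ext i; rcases eq_or_ne i a with rfl | hia <;> by_cases hi : i ∈ u <;> simp [*]

theorem Finset.set_ncard_biUnion {ι α : Type*} [Finite α] (t : Finset ι) {s : ι → Set α}
    (h : (t : Set ι).PairwiseDisjoint s) : (⋃ i ∈ t, s i).ncard = ∑ i ∈ t, (s i).ncard := by
  rw [← Finset.set_biUnion_coe,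
    Set.Finite.ncard_biUnion t.finite_toSet (fun _ _ ↦ Set.toFinite _) h, finsum_mem_coe_finset]

namespace SimpleGraph

variable {V : Type*} {G : SimpleGraph V} {K : Set V}

namespace ComponentCompl

theorem coe_eq_image_supp (C : G.ComponentCompl K) :
    (C : Set V) = Subtype.val '' ConnectedComponent.supp C := by
  ext v
  simp [ComponentCompl.mem_supp_iff, ConnectedComponent.mem_supp_iff]

theorem coe_subset_of_forall_not_adj {M N : Set V} (hcover : Kᶜ ⊆ M ∪ N)
    (hMN : ∀ u ∈ M, ∀ v ∈ N, ¬G.Adj u v) {C : G.ComponentCompl K} {v : V} (hvC : v ∈ C)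
    (hvM : v ∈ M) : (C : Set V) ⊆ M := by
  obtain ⟨hvK, rfl⟩ := hvC
  rintro w ⟨hwK, hw⟩
  by_contra hwM
  obtain ⟨p⟩ := ConnectedComponent.exact hw.symm
  obtain ⟨d, -, hd, hd'⟩ := p.exists_boundary_dart {x | x.1 ∈ M} hvM hwM
  exact hMN _ hd _ ((hcover d.snd.2).resolve_left hd') d.adj

theorem coe_subset_or_subset_or_subset {M₁ M₂ M₃ : Set V} (hcover : M₁ ∪ M₂ ∪ M₃ = Kᶜ)
    (h₁₂ : ∀ u ∈ M₁, ∀ v ∈ M₂, ¬G.Adj u v) (h₁₃ : ∀ u ∈ M₁, ∀ v ∈ M₃, ¬G.Adj u v)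
    (h₂₃ : ∀ u ∈ M₂, ∀ v ∈ M₃, ¬G.Adj u v) (C : G.ComponentCompl K) :
    (C : Set V) ⊆ M₁ ∨ (C : Set V) ⊆ M₂ ∨ (C : Set V) ⊆ M₃ := by
  obtain ⟨v, hvK, rfl⟩ := C.exists_eq_mk
  have hvC := G.componentComplMk_mem hvK
  rcases (hcover ▸ hvK : v ∈ M₁ ∪ M₂ ∪ M₃) with (hv | hv) | hv
  · refine .inl (coe_subset_of_forall_not_adj (N := M₂ ∪ M₃) ?_ ?_ hvC hv)
    · rw [← Set.union_assoc, hcover]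
    · exact fun u hu w hw ↦ hw.elim (h₁₂ u hu w) (h₁₃ u hu w)
  · refine .inr (.inl (coe_subset_of_forall_not_adj (N := M₁ ∪ M₃) ?_ ?_ hvC hv))
    · rw [Set.union_left_comm, ← Set.union_assoc, hcover]
    · exact fun u hu w hw ↦ hw.elim (fun hw h ↦ h₁₂ w hw u hu h.symm) (h₂₃ u hu w)
  · refine .inr (.inr (coe_subset_of_forall_not_adj (N := M₁ ∪ M₂) ?_ ?_ hvC hv))
    · rw [Set.union_comm, hcover]
    · exact fun u hu w hw ↦ hw.elim (fun hw h ↦ h₁₃ w hw u hu h.symm)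
        (fun hw h ↦ h₂₃ w hw u hu h.symm)

end ComponentCompl

theorem pairwiseDisjoint_componentCompl_inter (t : Set (G.ComponentCompl K)) (S : Set V) :
    t.PairwiseDisjoint fun C ↦ (C : Set V) ∩ S :=
  fun _ _ _ _ hCD ↦ (ComponentCompl.pairwise_disjoint hCD).mono inf_le_left inf_le_left

theorem sum_ncard_componentCompl_inter_le [Finite V] [Fintype (G.ComponentCompl K)] (S : Set V) :
    ∑ C : G.ComponentCompl K, ((C : Set V) ∩ S).ncard ≤ S.ncard := by
  rw [← Finset.set_ncard_biUnion _ (pairwiseDisjoint_componentCompl_inter _ S)]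
  exact Set.ncard_le_ncard (Set.iUnion₂_subset fun _ _ ↦ Set.inter_subset_right)

variable (G K) in
def labelSet {ι : Type*} (g : G.ComponentCompl K → ι) (k : ι) : Set V :=
  {v | ∃ hv : v ∉ K, g (G.componentComplMk hv) = k}

section labelSet

variable {ι : Type*} {g : G.ComponentCompl K → ι} {k l : ι}

theorem disjoint_labelSet (hkl : k ≠ l) : Disjoint (G.labelSet K g k) (G.labelSet K g l) :=
  Set.disjoint_left.2 fun _ ⟨_, hk⟩ ⟨_, hl⟩ ↦ hkl (hk.symm.trans hl)

theorem not_adj_of_mem_labelSet (hkl : k ≠ l) {u v : V} (hu : u ∈ G.labelSet K g k)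
    (hv : v ∈ G.labelSet K g l) : ¬G.Adj u v := fun huv ↦ by
  obtain ⟨huK, rfl⟩ := hu
  obtain ⟨hvK, rfl⟩ := hv
  exact hkl (congrArg g (G.componentComplMk_eq_of_adj huK hvK huv))

theorem labelSet_union_labelSet_union_labelSet (g : G.ComponentCompl K → Fin 3) :
    G.labelSet K g 0 ∪ G.labelSet K g 1 ∪ G.labelSet K g 2 = Kᶜ := by
  ext v
  simp only [labelSet, Set.mem_union, Set.mem_ofPred_eq, Set.mem_compl_iff]
  refine ⟨by rintro ((⟨hv, -⟩ | ⟨hv, -⟩) | ⟨hv, -⟩) <;> exact hv, fun hv ↦ ?_⟩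
  match hg : g (G.componentComplMk hv) with
  | 0 => exact .inl (.inl ⟨hv, hg⟩)
  | 1 => exact .inl (.inr ⟨hv, hg⟩)
  | 2 => exact .inr ⟨hv, hg⟩

theorem ncard_labelSet_inter [Finite V] [Fintype (G.ComponentCompl K)] [DecidableEq ι]
    (S : Set V) : (G.labelSet K g k ∩ S).ncard = ∑ C with g C = k, ((C : Set V) ∩ S).ncard := by
  rw [← Finset.set_ncard_biUnion _ (pairwiseDisjoint_componentCompl_inter _ S)]
  congr 1
  ext v
  simp [labelSet, ComponentCompl.mem_supp_iff]

end labelSet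

end SimpleGraph

theorem balancedSSep_iff_forall_componentCompl {V : Type} {G : SimpleGraph V} {S X : Set V} :
    BalancedSSep G S X ↔ ∀ C : G.ComponentCompl X, 2 * ((C : Set V) ∩ S).ncard ≤ S.ncard := by
  simp only [BalancedSSep, ComponentCompl.coe_eq_image_supp]

theorem statement5 {V : Type} [Fintype V] (G : SimpleGraph V) (S X : Set V) :
    BalancedSSep G S X ↔
      ∃ M1 M2 M3 : Set V,
        M1 ∪ M2 ∪ M3 = Xᶜ ∧
        Disjoint M1 M2 ∧ Disjoint M1 M3 ∧ Disjoint M2 M3 ∧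
        (∀ u ∈ M1, ∀ v ∈ M2, ¬ G.Adj u v) ∧
        (∀ u ∈ M1, ∀ v ∈ M3, ¬ G.Adj u v) ∧
        (∀ u ∈ M2, ∀ v ∈ M3, ¬ G.Adj u v) ∧
        2 * (M1 ∩ S).ncard ≤ S.ncard ∧
        2 * (M2 ∩ S).ncard ≤ S.ncard ∧
        2 * (M3 ∩ S).ncard ≤ S.ncard := by
  classical
  have := Fintype.ofFinite (G.ComponentCompl X)
  rw [balancedSSep_iff_forall_componentCompl]
  constructor
  · intro hbal
    obtain ⟨g, hg⟩ := exists_fin_three_forall_two_mul_sum_fiber_le _ hbal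
      (sum_ncard_componentCompl_inter_le S)
    refine ⟨G.labelSet X g 0, G.labelSet X g 1, G.labelSet X g 2,
      labelSet_union_labelSet_union_labelSet g, disjoint_labelSet (by decide),
      disjoint_labelSet (by decide), disjoint_labelSet (by decide),
      fun _ hu _ hv ↦ not_adj_of_mem_labelSet (by decide) hu hv,
      fun _ hu _ hv ↦ not_adj_of_mem_labelSet (by decide) hu hv,
      fun _ hu _ hv ↦ not_adj_of_mem_labelSet (by decide) hu hv, ?_, ?_, ?_⟩ <;>
    rw [ncard_labelSet_inter] <;> exact hg _
  · rintro ⟨M1, M2, M3, hcover, -, -, -, h12, h13, h23, hM1, hM2, hM3⟩ C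
    have hle {M : Set V} (hCM : (C : Set V) ⊆ M) (hM : 2 * (M ∩ S).ncard ≤ S.ncard) :
        2 * ((C : Set V) ∩ S).ncard ≤ S.ncard :=
      (Nat.mul_le_mul_left 2 (Set.ncard_le_ncard (Set.inter_subset_inter_left S hCM))).trans hM
    rcases C.coe_subset_or_subset_or_subset hcover h12 h13 h23 with hC | hC | hC
    exacts [hle hC hM1, hle hC hM2, hle hC hM3]
end

section
/- Let T be a finite rooted tree with root r and let μ : V(T) → ℝ be a function satisfying: (i) μ(v) ≥ 1 for every v ∈ V(T); (ii) for every vertex v with children v_1, …, v_p, Σ_{i=1}^p μ(v_i) ≤ μ(v); and (iii) there exists a constant 0 < C < 1 such that whenever v is the parent of v', μ(v') ≤ C·μ(v). Then |V(T)| ≤ (1 + 1/(1−C))·μ(r) − 1. -/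
/-!
Write `s v = μ v - ∑ μ (children of v)` for the slack at `v`. Every non-root vertex is the child of
exactly one vertex, so the slacks telescope: `∑ v, s v = μ r`, while `∑ v, #children v = |V| - 1`.
It therefore suffices to prove `2 - #children v ≤ (1 + 1 / (1 - C)) * s v` at each vertex: a leaf has
`s v = μ v ≥ 1`, a vertex with one child `u` has `s v ≥ (1 - C) μ v ≥ 1 - C`, and with two or more
children the left side is nonpositive while `s v ≥ 0`. Summing gives `|V| + 1 ≤ (1 + 1 / (1 - C)) μ r`.
-/

open Finset

namespace SimpleGraph

variable {V : Type*} {G : SimpleGraph V}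

variable (G) in
def IsChild (r u v : V) : Prop := G.Adj u v ∧ G.dist r u = G.dist r v + 1

lemma not_isChild_root {r v : V} : ¬ G.IsChild r r v := by
  simp [IsChild]

lemma Connected.exists_isChild (hG : G.Connected) {r u : V} (hu : u ≠ r) :
    ∃ v, G.IsChild r u v := by
  obtain ⟨p, -, hp⟩ := hG.exists_path_of_dist u r
  have hnil : ¬ p.Nil := Walk.not_nil_of_ne hu
  refine ⟨p.snd, p.adj_snd hnil, le_antisymm ?_ ?_⟩
  · calc G.dist r u ≤ G.dist r p.snd + G.dist p.snd u := hG.dist_triangle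
      _ = G.dist r p.snd + 1 := by rw [dist_eq_one_iff_adj.mpr (p.adj_snd hnil).symm]
  · calc G.dist r p.snd + 1 ≤ p.tail.length + 1 := by
          rw [dist_comm]; exact Nat.add_le_add_right (dist_le _) 1
      _ = G.dist r u := by rw [Walk.length_tail_add_one hnil, hp, dist_comm]

lemma IsTree.isChild_unique (hG : G.IsTree) {r u v w : V} (hv : G.IsChild r u v)
    (hw : G.IsChild r u w) : v = w := by
  obtain ⟨p, -, hp⟩ := hG.connected.exists_path_of_dist r v
  obtain ⟨q, -, hq⟩ := hG.connected.exists_path_of_dist r w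
  have hP : (p.concat hv.1.symm).IsPath :=
    Walk.isPath_of_length_eq_dist _ (by rw [Walk.length_concat, hp, hv.2])
  have hQ : (q.concat hw.1.symm).IsPath :=
    Walk.isPath_of_length_eq_dist _ (by rw [Walk.length_concat, hq, hw.2])
  have hPQ := (hG.isAcyclic.subsingleton_path r u).elim ⟨_, hP⟩ ⟨_, hQ⟩
  exact (Walk.concat_inj (congrArg Subtype.val hPQ)).1

variable [Fintype V] [DecidableRel G.Adj]

variable (G) in
noncomputable def children (r v : V) : Finset V :=
  univ.filter fun u => G.Adj u v ∧ G.dist r u = G.dist r v + 1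

lemma mem_children {r u v : V} : u ∈ G.children r v ↔ G.IsChild r u v := by
  simp [children, IsChild]

lemma IsTree.pairwiseDisjoint_children (hG : G.IsTree) (r : V) :
    (Set.univ : Set V).PairwiseDisjoint (G.children r) := by
  intro v _ w _ hvw
  refine Finset.disjoint_left.mpr fun u hv hw => hvw ?_
  exact hG.isChild_unique (mem_children.mp hv) (mem_children.mp hw)

lemma Connected.biUnion_children [DecidableEq V] (hG : G.Connected) (r : V) :
    univ.biUnion (G.children r) = univ.erase r := by
  ext u
  simp only [mem_biUnion, mem_univ, true_and, mem_erase, and_true, mem_children]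
  exact ⟨fun ⟨_, hu⟩ hur => not_isChild_root (hur ▸ hu), hG.exists_isChild⟩

lemma IsTree.sum_children_add_root {M : Type*} [AddCommMonoid M] (hG : G.IsTree) (r : V)
    (f : V → M) : ∑ v, ∑ u ∈ G.children r v, f u + f r = ∑ u, f u := by
  classical
  rw [← sum_biUnion (by simpa using hG.pairwiseDisjoint_children r),
    hG.connected.biUnion_children r, sum_erase_add _ _ (mem_univ r)]

lemma IsTree.sum_sub_sum_children {M : Type*} [AddCommGroup M] (hG : G.IsTree) (r : V)
    (f : V → M) : ∑ v, (f v - ∑ u ∈ G.children r v, f u) = f r := by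
  rw [sum_sub_distrib, ← hG.sum_children_add_root r f, add_sub_cancel_left]

lemma IsTree.sum_card_children_add_one (hG : G.IsTree) (r : V) :
    ∑ v, #(G.children r v) + 1 = Fintype.card V := by
  rw [← card_univ]
  simp only [card_eq_sum_ones]
  exact hG.sum_children_add_root r fun _ => 1

lemma two_sub_card_children_le {r v : V} {μ : V → ℝ} {C : ℝ} (hv : 1 ≤ μ v)
    (hsum : ∑ u ∈ G.children r v, μ u ≤ μ v) (hC0 : 0 ≤ C) (hC1 : C < 1)
    (hchild : ∀ u, G.IsChild r u v → μ u ≤ C * μ v) :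
    2 - (#(G.children r v) : ℝ) ≤ (1 + 1 / (1 - C)) * (μ v - ∑ u ∈ G.children r v, μ u) := by
  have hK : 1 ≤ 1 / (1 - C) := by rw [le_div_iff₀ (by linarith)]; linarith
  have hKC : 1 / (1 - C) * (1 - C) = 1 := one_div_mul_cancel (by linarith)
  rcases hcard : #(G.children r v) with _ | _ | n
  · rw [card_eq_zero.mp hcard]
    simp only [sum_empty, Nat.cast_zero]
    nlinarith
  · obtain ⟨u, hu⟩ := card_eq_one.mp hcard
    have hμu := hchild u (mem_children.mp (hu ▸ mem_singleton_self u))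
    rw [hu, sum_singleton, Nat.cast_one]
    nlinarith
  · have : (0 : ℝ) ≤ (1 + 1 / (1 - C)) * (μ v - ∑ u ∈ G.children r v, μ u) :=
      mul_nonneg (by linarith) (by linarith)
    push_cast
    linarith

end SimpleGraph

open SimpleGraph

theorem statement7 {T : Type} [Fintype T] (tree : SimpleGraph T) [DecidableRel tree.Adj]
    (htree : tree.IsTree) (r : T) (μ : T → ℝ) (C : ℝ)
    (h1 : ∀ v, 1 ≤ μ v)
    (h2 : ∀ v : T,
      ∑ u ∈ Finset.univ.filter (fun u => tree.Adj u v ∧ tree.dist r u = tree.dist r v + 1),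
        μ u ≤ μ v)
    (hC0 : 0 < C) (hC1 : C < 1)
    (h3 : ∀ u v : T, tree.Adj u v → tree.dist r u = tree.dist r v + 1 → μ u ≤ C * μ v) :
    (Fintype.card T : ℝ) ≤ (1 + 1 / (1 - C)) * μ r - 1 := by
  have hcard : (Fintype.card T : ℝ) = ∑ v, (2 - (#(tree.children r v) : ℝ)) - 1 := by
    rw [sum_sub_distrib, sum_const, card_univ, nsmul_eq_mul,
      ← htree.sum_card_children_add_one r]
    push_cast
    ring
  calc (Fintype.card T : ℝ)
      ≤ ∑ v, (1 + 1 / (1 - C)) * (μ v - ∑ u ∈ tree.children r v, μ u) - 1 := by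
        rw [hcard]
        gcongr with v
        exact two_sub_card_children_le (h1 v) (h2 v) hC0.le hC1 fun u hu => h3 u v hu.1 hu.2
    _ = (1 + 1 / (1 - C)) * μ r - 1 := by rw [← mul_sum, htree.sum_sub_sum_children r μ]
end

section
/- Let G be a finite graph of treewidth at most k and let (A_1, B, A_2) be a partition of V(G) such that no edge of G joins a vertex of A_1 to a vertex of A_2 and |A_1|, |A_2| ≤ (3/4)|V(G)|. Then there exist a partition (T_L, X_B, T_R) of B and integers k_1, k_2 with k_1 + k_2 + |X_B| ≤ k+1 such that, letting G_1 be the induced subgraph G[A_1 ∪ (B ∖ X_B)] and G_2 be G[A_2 ∪ (B ∖ X_B)], each equipped with terminal sets T_L and T_R, the following hold: (i) G_1 admits a terminal separation of order k_1 and G_2 admits a terminal separation of order k_2; (ii) for every left-pushed terminal separation (L_1, X_1, R_1) of order k_1 in G_1 and every right-pushed terminal separation (L_2, X_2, R_2) of order k_2 in G_2, the triple (L_1 ∪ T_L ∪ L_2, X_1 ∪ X_B ∪ X_2, R_1 ∪ T_R ∪ R_2) is a partition of V(G) with T_L contained in the first part, T_R contained in the third part, no edge of G between the first and third parts, the middle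 part of size at most k+1, and both |L_1 ∪ T_L ∪ L_2| and |R_1 ∪ T_R ∪ R_2| at most (7/8)|V(G)| + (|B| + k + 1)/2. -/
open SimpleGraph

/-- `(L, X, R)` is a terminal separation of order `ℓ` of the induced subgraph `G[W]`
with terminal sets `TL` and `TR`. -/
def IsTermSep {V : Type} (G : SimpleGraph V) (W TL TR : Set V) (ℓ : ℕ)
    (L X R : Set V) : Prop :=
  L ∪ X ∪ R = W ∧ Disjoint L X ∧ Disjoint L R ∧ Disjoint X R ∧
  TL ⊆ L ∧ TR ⊆ R ∧ (∀ u ∈ L, ∀ v ∈ R, ¬ G.Adj u v) ∧ X.ncard ≤ ℓ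

/-- A terminal separation of order `ℓ` maximizing the size of the left side. -/
def IsLeftPushed {V : Type} (G : SimpleGraph V) (W TL TR : Set V) (ℓ : ℕ)
    (L X R : Set V) : Prop :=
  IsTermSep G W TL TR ℓ L X R ∧
  ∀ L' X' R', IsTermSep G W TL TR ℓ L' X' R' → L'.ncard ≤ L.ncard

/-- A terminal separation of order `ℓ` maximizing the size of the right side. -/
def IsRightPushed {V : Type} (G : SimpleGraph V) (W TL TR : Set V) (ℓ : ℕ)
    (L X R : Set V) : Prop :=
  IsTermSep G W TL TR ℓ L X R ∧
  ∀ L' X' R', IsTermSep G W TL TR ℓ L' X' R' → R'.ncard ≤ R.ncard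

/-!
A tree decomposition of width `k` has a bag `X` such that every component of `G - X` has at most
`n/2` vertices: otherwise the walk in the tree that moves from each bag towards the bags of its
large component could neither turn back nor go on forever. Grouping the components of `G - X`
gives a separation `(P, X, Q)` with `|P|, |Q| ≤ 2n/3`, and as `|A₁|, |A₂| ≤ 3n/4`, one of its two
orientations has `|P ∩ A₁|, |Q ∩ A₂| ≥ n/8 - (|B| + k + 1)/2`.

Restricting `(P, X, Q)` to `A₁ ∪ B` and to `A₂ ∪ B` gives `T_L = P ∩ B`, `X_B = X ∩ B`,
`T_R = Q ∩ B` and terminal separations of orders `|X ∩ A₁|` and `|X ∩ A₂|`. Any two terminal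
separations of these orders glue along `B` to a separation of `G`. A right-pushed one on the
`A₂`-side has at least `|Q ∩ A₂|` vertices on its right, so the glued left side has at most
`n - |Q ∩ A₂|` vertices; symmetrically for the right side.
-/

namespace SimpleGraph

lemma Reachable.mem_of_forall_adj {V : Type} {G : SimpleGraph V} {u v : V}
    (h : G.Reachable u v) {s : Set V} (hs : ∀ a b, G.Adj a b → a ∈ s → b ∈ s) (hu : u ∈ s) :
    v ∈ s := by
  obtain ⟨p⟩ := h
  induction p with
  | nil => exact hu
  | cons hadj _ ih => exact ih (hs _ _ hadj hu)

variable {ι : Type} {T : SimpleGraph ι}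

/-- For an edge `ij` of a tree `T`, the component of `T - ij` containing `j`. -/
def branch (T : SimpleGraph ι) (i j : ι) : Set ι := {x | T.dist x j < T.dist x i}

lemma disjoint_branch_branch (i j : ι) : Disjoint (T.branch i j) (T.branch j i) :=
  Set.disjoint_left.2 fun _ h h' => lt_asymm (α := ℕ) h h'

variable {i j : ι}

lemma IsTree.mem_branch_iff (hT : T.IsTree) (hij : T.Adj i j) {x : ι} :
    x ∈ T.branch i j ↔ T.dist x i = T.dist x j + 1 := by
  have := hT.dist_eq_dist_add_one_of_adj x hij
  simp only [branch, Set.mem_ofPred_eq]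
  omega

lemma IsTree.exists_isPath_cons_of_mem_branch (hT : T.IsTree) (hij : T.Adj i j) {x : ι}
    (hx : x ∈ T.branch i j) : ∃ q : T.Walk j x, (Walk.cons hij q).IsPath := by
  obtain ⟨q, hq⟩ := hT.connected.exists_walk_length_eq_dist j x
  refine ⟨q, Walk.isPath_of_length_eq_dist _ ?_⟩
  rw [Walk.length_cons, hq, dist_comm, dist_comm (u := i), (hT.mem_branch_iff hij).1 hx]

/-- The neighbour `j` is the second vertex of the path from `i` to any `x` in its branch. -/
lemma IsTree.eq_of_mem_branch (hT : T.IsTree) {j' : ι} (hij : T.Adj i j) (hij' : T.Adj i j')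
    {x : ι} (hx : x ∈ T.branch i j) (hx' : x ∈ T.branch i j') : j = j' := by
  obtain ⟨q, hq⟩ := hT.exists_isPath_cons_of_mem_branch hij hx
  obtain ⟨q', hq'⟩ := hT.exists_isPath_cons_of_mem_branch hij' hx'
  have h := (hT.isAcyclic.subsingleton_path i x).elim ⟨_, hq⟩ ⟨_, hq'⟩
  simpa using congrArg (fun p : T.Path i x => p.1.snd) h

lemma IsTree.exists_mem_branch (hT : T.IsTree) {x : ι} (hxi : x ≠ i) :
    ∃ j, T.Adj i j ∧ x ∈ T.branch i j := by
  obtain ⟨p, hp⟩ := hT.connected.exists_walk_length_eq_dist i x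
  cases p with
  | nil => exact absurd rfl hxi
  | @cons _ j _ hij q =>
    refine ⟨j, hij, ?_⟩
    have := dist_le q.reverse
    rw [Walk.length_reverse] at this
    rw [Walk.length_cons] at hp
    simp only [branch, Set.mem_ofPred_eq, dist_comm (u := x) (v := i)]
    omega

/-- If `b` is closer to `i` than `a`, then `a` lies in the branch at `i` containing `b`, which is
the branch towards `j` by uniqueness; otherwise use the triangle inequality. -/
lemma IsTree.mem_branch_of_adj (hT : T.IsTree) (hij : T.Adj i j) {a b : ι}
    (ha : a ∈ T.branch i j) (hab : T.Adj a b) (hbi : b ≠ i) : b ∈ T.branch i j := by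
  have hba : T.dist b a = 1 := dist_eq_one_iff_adj.2 hab.symm
  have hab' : T.dist a b = 1 := dist_eq_one_iff_adj.2 hab
  rcases hT.dist_eq_dist_add_one_of_adj i hab with h | h
  · obtain ⟨j', hij', hb⟩ := hT.exists_mem_branch hbi
    have ha' : a ∈ T.branch i j' := by
      have := hT.connected.dist_triangle (u := a) (v := b) (w := j')
      have := (hT.mem_branch_iff hij').1 hb
      simp only [branch, Set.mem_ofPred_eq, dist_comm (u := a) (v := i),
        dist_comm (u := b) (v := i)] at *
      omega
    rwa [hT.eq_of_mem_branch hij hij' ha ha']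
  · have := hT.connected.dist_triangle (u := b) (v := a) (w := j)
    simp only [branch, Set.mem_ofPred_eq, dist_comm (u := a) (v := i),
      dist_comm (u := b) (v := i)] at *
    omega

lemma IsTree.branch_subset_branch (hT : T.IsTree) {l : ι} (hij : T.Adj i j) (hjl : T.Adj j l)
    (hli : l ≠ i) : T.branch j l ⊆ T.branch i j := by
  intro x hx
  rcases hT.dist_eq_dist_add_one_of_adj x hij with h | h
  · exact (hT.mem_branch_iff hij).2 h
  · exact absurd (hT.eq_of_mem_branch hjl hij.symm hx ((hT.mem_branch_iff hij.symm).2 h)) hli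

lemma IsTree.subset_branch_of_connected (hT : T.IsTree) (hij : T.Adj i j) {S : Set ι}
    (hS : (T.induce S).Connected) (hiS : i ∉ S) {x : ι} (hxS : x ∈ S)
    (hx : x ∈ T.branch i j) : S ⊆ T.branch i j := fun y hyS =>
  (hS.preconnected ⟨x, hxS⟩ ⟨y, hyS⟩).mem_of_forall_adj (s := {z : S | (z : ι) ∈ T.branch i j})
    (fun _ b hab ha => hT.mem_branch_of_adj hij ha hab fun h => hiS (h ▸ b.2)) hx

end SimpleGraph

/-- `G - X`, with the vertices of `X` kept as isolated vertices. -/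
def SimpleGraph.isolateVerts {V : Type} (G : SimpleGraph V) (X : Set V) : SimpleGraph V where
  Adj u v := G.Adj u v ∧ u ∉ X ∧ v ∉ X
  symm := ⟨fun _ _ ⟨h, hu, hv⟩ => ⟨h.symm, hv, hu⟩⟩
  loopless := ⟨fun _ h => G.irrefl h.1⟩

def confinedVerts {V ι : Type} (bag : ι → Set V) (U : Set ι) : Set V := {v | {x | v ∈ bag x} ⊆ U}

section TreeDecomp

variable {V ι : Type} {G : SimpleGraph V} {T : SimpleGraph ι} {bag : ι → Set V}

lemma disjoint_confinedVerts (hcov : ∀ v, ∃ x, v ∈ bag x) {U U' : Set ι} (h : Disjoint U U') :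
    Disjoint (confinedVerts bag U) (confinedVerts bag U') :=
  Set.disjoint_left.2 fun v hv hv' =>
    have ⟨_, hx⟩ := hcov v
    Set.disjoint_left.1 h (hv hx) (hv' hx)

lemma IsTreeDecomp.reachable_subset_confinedVerts (htd : IsTreeDecomp G T bag) {i j : ι}
    (hij : T.Adj i j) {v : V} (hv : v ∉ bag i) {x : ι} (hvx : v ∈ bag x)
    (hx : x ∈ T.branch i j) :
    {w | (G.isolateVerts (bag i)).Reachable v w} ⊆ confinedVerts bag (T.branch i j) := by
  obtain ⟨hT, -, hedge, hconn⟩ := htd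
  have hconf : ∀ w, w ∉ bag i → ∀ y, w ∈ bag y → y ∈ T.branch i j →
      w ∈ confinedVerts bag (T.branch i j) :=
    fun w hw y hwy hy => hT.subset_branch_of_connected hij (hconn w) hw hwy hy
  intro w hw
  refine hw.mem_of_forall_adj (fun a b hab ha => ?_) (hconf v hv x hvx hx)
  obtain ⟨y, hay, hby⟩ := hedge a b hab.1
  exact hconf b hab.2.2 y hby (ha hay)

variable [Finite V]

lemma IsTreeDecomp.exists_adj_large_confinedVerts (htd : IsTreeDecomp G T bag) {i : ι} {v : V}
    (hv : v ∉ bag i) (hbig : Nat.card V < 2 * {w | (G.isolateVerts (bag i)).Reachable v w}.ncard) :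
    ∃ j, T.Adj i j ∧ Nat.card V < 2 * (confinedVerts bag (T.branch i j)).ncard := by
  obtain ⟨x, hvx⟩ := htd.2.1 v
  obtain ⟨j, hij, hx⟩ := htd.1.exists_mem_branch (x := x) (i := i) fun h => hv (h ▸ hvx)
  exact ⟨j, hij, hbig.trans_le <| Nat.mul_le_mul_left 2 <|
    Set.ncard_le_ncard (htd.reachable_subset_confinedVerts hij hv hvx hx)⟩

/-- The walk cannot turn back, as the two confined sets of an edge are disjoint; so the confined
sets shrink along it and eventually stabilise, after which the distance to a bag of a fixed
vertex decreases forever. -/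
lemma IsTreeDecomp.not_forall_large_confinedVerts (htd : IsTreeDecomp G T bag) (a : ℕ → ι)
    (hadj : ∀ t, T.Adj (a t) (a (t + 1))) :
    ¬ ∀ t, Nat.card V < 2 * (confinedVerts bag (T.branch (a t) (a (t + 1)))).ncard := by
  intro hbig
  obtain ⟨hT, hcov, -, -⟩ := htd
  have hback : ∀ t, a (t + 2) ≠ a t := by
    intro t h
    have h₁ := hbig t
    have h₂ := hbig (t + 1)
    rw [show t + 1 + 1 = t + 2 from rfl, h] at h₂
    have hdisj := disjoint_confinedVerts hcov (T.disjoint_branch_branch (a t) (a (t + 1)))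
    have := Set.ncard_union_eq hdisj
    have := Set.ncard_le_card (confinedVerts bag (T.branch (a t) (a (t + 1))) ∪
      confinedVerts bag (T.branch (a (t + 1)) (a t)))
    omega
  have hanti : Antitone fun t => confinedVerts bag (T.branch (a t) (a (t + 1))) :=
    antitone_nat_of_succ_le fun t _ hv _ hx =>
      hT.branch_subset_branch (hadj t) (hadj (t + 1)) (hback t) (hv hx)
  obtain ⟨t₀, ht₀⟩ := WellFoundedLT.antitone_chain_condition hanti
  obtain ⟨v, hv⟩ : (confinedVerts bag (T.branch (a t₀) (a (t₀ + 1)))).Nonempty :=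
    Set.nonempty_of_ncard_ne_zero (by have := hbig t₀; omega)
  obtain ⟨x, hx⟩ := hcov v
  refine not_strictAnti_of_wellFoundedLT (fun s => T.dist x (a (t₀ + s)))
    (strictAnti_nat_of_succ_lt fun s => ?_)
  exact (ht₀ (t₀ + s) (by omega) ▸ hv) hx

theorem TreewidthAtMost.exists_small_components {k : ℕ} (htw : TreewidthAtMost G k) :
    ∃ X : Set V, X.ncard ≤ k + 1 ∧
      ∀ v ∉ X, 2 * {w | (G.isolateVerts X).Reachable v w}.ncard ≤ Nat.card V := by
  obtain ⟨ι, T, bag, htd, hsize⟩ := htw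
  by_contra! hbad
  choose f hf using fun i =>
    have ⟨v, hv, hbig⟩ := hbad (bag i) (hsize i)
    htd.exists_adj_large_confinedVerts hv hbig
  obtain ⟨i₀⟩ := htd.1.connected.nonempty
  have hsucc : ∀ t, f^[t + 1] i₀ = f (f^[t] i₀) := fun t => Function.iterate_succ_apply' f t i₀
  exact htd.not_forall_large_confinedVerts (fun t => f^[t] i₀) (fun t => hsucc t ▸ (hf _).1)
    fun t => hsucc t ▸ (hf _).2

end TreeDecomp

section Separations

variable {V : Type} {G : SimpleGraph V}

lemma IsTermSep.symm {W TL TR : Set V} {ℓ : ℕ} {L X R : Set V}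
    (h : IsTermSep G W TL TR ℓ L X R) : IsTermSep G W TR TL ℓ R X L := by
  obtain ⟨hcov, hLX, hLR, hXR, hTL, hTR, hedge, hX⟩ := h
  refine ⟨?_, hXR.symm, hLR.symm, hLX.symm, hTR, hTL,
    fun u hu v hv huv => hedge v hv u hu huv.symm, hX⟩
  rw [← hcov]
  ac_rfl

lemma IsTermSep.mono_order {W TL TR : Set V} {ℓ ℓ' : ℕ} {L X R : Set V}
    (h : IsTermSep G W TL TR ℓ L X R) (hℓ : ℓ ≤ ℓ') : IsTermSep G W TL TR ℓ' L X R :=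
  have ⟨hcov, hLX, hLR, hXR, hTL, hTR, hedge, hX⟩ := h
  ⟨hcov, hLX, hLR, hXR, hTL, hTR, hedge, hX.trans hℓ⟩

lemma IsTermSep.inter {TL' TR' : Set V} {ℓ : ℕ} {L X R : Set V}
    (h : IsTermSep G Set.univ TL' TR' ℓ L X R) (W : Set V) {TL TR : Set V}
    (hTL : TL ⊆ L ∩ W) (hTR : TR ⊆ R ∩ W) :
    IsTermSep G W TL TR (X ∩ W).ncard (L ∩ W) (X ∩ W) (R ∩ W) := by
  obtain ⟨hcov, hLX, hLR, hXR, -, -, hedge, -⟩ := h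
  refine ⟨?_, hLX.mono Set.inter_subset_left Set.inter_subset_left,
    hLR.mono Set.inter_subset_left Set.inter_subset_left,
    hXR.mono Set.inter_subset_left Set.inter_subset_left, hTL, hTR,
    fun u hu v hv => hedge u hu.1 v hv.1, le_rfl⟩
  rw [← Set.union_inter_distrib_right, ← Set.union_inter_distrib_right, hcov, Set.univ_inter]

lemma IsTermSep.ncard_eq_add [Finite V] {TL TR : Set V} {ℓ : ℕ} {L X R : Set V}
    (h : IsTermSep G Set.univ TL TR ℓ L X R) (S : Set V) :
    S.ncard = (S ∩ L).ncard + (S ∩ X).ncard + (S ∩ R).ncard := by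
  obtain ⟨hcov, hLX, hLR, hXR, -⟩ := h
  have hLX' := hLX.mono (Set.inter_subset_right (s := S)) (Set.inter_subset_right (s := S))
  have hLXR : Disjoint (S ∩ L ∪ S ∩ X) (S ∩ R) :=
    Disjoint.union_left (hLR.mono Set.inter_subset_right Set.inter_subset_right)
      (hXR.mono Set.inter_subset_right Set.inter_subset_right)
  rw [← Set.ncard_union_eq hLX', ← Set.ncard_union_eq hLXR, ← Set.inter_union_distrib_left,
    ← Set.inter_union_distrib_left, hcov, Set.inter_univ]

lemma IsTermSep.subset_of_partition {A B TL XB TR : Set V} {ℓ : ℕ} {L X R : Set V}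
    (h : IsTermSep G (A ∪ (B \ XB)) TL TR ℓ L X R) (hB : TL ∪ XB ∪ TR = B) :
    L ⊆ A ∪ TL ∧ X ⊆ A ∧ R ⊆ A ∪ TR := by
  obtain ⟨hcov, hLX, hLR, hXR, hTL, hTR, -, -⟩ := h
  simp only [Set.ext_iff, Set.subset_def, Set.disjoint_left, Set.mem_union, Set.mem_sdiff] at *
  grind

lemma IsTermSep.glue {A₁ B A₂ TL XB TR : Set V} {m k₁ k₂ : ℕ} {L₁ X₁ R₁ L₂ X₂ R₂ : Set V}
    (hA : IsTermSep G Set.univ ∅ ∅ m A₁ B A₂) (hB : TL ∪ XB ∪ TR = B)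
    (h₁ : IsTermSep G (A₁ ∪ (B \ XB)) TL TR k₁ L₁ X₁ R₁)
    (h₂ : IsTermSep G (A₂ ∪ (B \ XB)) TL TR k₂ L₂ X₂ R₂) :
    IsTermSep G Set.univ TL TR (k₁ + k₂ + XB.ncard)
      (L₁ ∪ TL ∪ L₂) (X₁ ∪ XB ∪ X₂) (R₁ ∪ TR ∪ R₂) := by
  obtain ⟨hL₁, hX₁, hR₁⟩ := h₁.subset_of_partition hB
  obtain ⟨hL₂, hX₂, hR₂⟩ := h₂.subset_of_partition hB
  obtain ⟨hcov, h1B, h12, hB2, -, -, hedge, -⟩ := hA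
  obtain ⟨hcov₁, hLX₁, hLR₁, hXR₁, hTL₁, hTR₁, hedge₁, hcard₁⟩ := h₁
  obtain ⟨hcov₂, hLX₂, hLR₂, hXR₂, hTL₂, hTR₂, hedge₂, hcard₂⟩ := h₂
  -- `huv.symm` keeps both orientations of the edge in context for `grind`.
  refine ⟨?_, ?_, ?_, ?_, ?_, ?_, fun u hu v hv huv => absurd huv.symm ?_, ?_⟩
  rotate_right
  · grw [Set.ncard_union_le, Set.ncard_union_le, ← hcard₁, ← hcard₂]
    omega
  all_goals
    simp only [Set.ext_iff, Set.subset_def, Set.disjoint_left, Set.mem_union, Set.mem_sdiff,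
      Set.mem_univ] at *
    grind

end Separations

section Components

variable {V : Type} {G : SimpleGraph V}

lemma isTermSep_of_neighbors_subset {P X : Set V} (hPX : Disjoint P X)
    (hP : ∀ a ∈ P, ∀ b, G.Adj a b → b ∉ X → b ∈ P) :
    IsTermSep G Set.univ ∅ ∅ X.ncard P X (Xᶜ \ P) := by
  refine ⟨?_, hPX, Set.disjoint_sdiff_right, disjoint_compl_right.mono_right Set.sdiff_subset,
    Set.empty_subset _, Set.empty_subset _, fun u hu v hv huv => hv.2 (hP u hu v huv hv.1), le_rfl⟩
  ext v
  simp only [Set.mem_union, Set.mem_sdiff, Set.mem_compl_iff, Set.mem_univ, iff_true]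
  tauto

lemma reachable_isolateVerts_of_adj {X : Set V} {v a b : V}
    (ha : (G.isolateVerts X).Reachable v a) (hab : G.Adj a b) (haX : a ∉ X) (hbX : b ∉ X) :
    (G.isolateVerts X).Reachable v b :=
  ha.trans (SimpleGraph.Adj.reachable (G := G.isolateVerts X) ⟨hab, haX, hbX⟩)

lemma notMem_of_reachable_isolateVerts {X : Set V} {v w : V}
    (h : (G.isolateVerts X).Reachable v w) (hv : v ∉ X) : w ∉ X :=
  h.mem_of_forall_adj (s := Xᶜ) (fun _ _ hab _ => hab.2.2) hv

variable [Finite V]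

/-- `P` is a union of components of `G - X` with at least `n/3` vertices, and with as few
vertices as possible. -/
theorem exists_balanced_separation_of_components (X : Set V)
    (hK : ∀ v ∉ X, 3 * {w | (G.isolateVerts X).Reachable v w}.ncard ≤ 2 * Nat.card V) :
    ∃ P Q, IsTermSep G Set.univ ∅ ∅ X.ncard P X Q ∧
      3 * P.ncard ≤ 2 * Nat.card V ∧ 3 * Q.ncard ≤ 2 * Nat.card V := by
  have hXc : Xᶜ.ncard ≤ Nat.card V := Set.ncard_le_card _
  by_cases hsmall : 3 * Xᶜ.ncard < Nat.card V
  · refine ⟨∅, Xᶜ \ ∅, isTermSep_of_neighbors_subset (Set.empty_disjoint _) (by simp), by simp, ?_⟩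
    rw [Set.sdiff_empty]
    omega
  let M := {P : Set V | Disjoint P X ∧ (∀ a ∈ P, ∀ b, G.Adj a b → b ∉ X → b ∈ P) ∧
    Nat.card V ≤ 3 * P.ncard}
  obtain ⟨P, ⟨hPX, hP, hPn⟩, hmin⟩ := Set.exists_min_image M Set.ncard (Set.toFinite M)
    ⟨Xᶜ, disjoint_compl_left, fun _ _ _ _ hb => hb, by omega⟩
  refine ⟨P, Xᶜ \ P, isTermSep_of_neighbors_subset hPX hP, ?_, ?_⟩
  · rcases P.eq_empty_or_nonempty with rfl | ⟨v, hv⟩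
    · simp
    have hvX : v ∉ X := Set.disjoint_left.1 hPX hv
    have hKv := hK v hvX
    set K := {w | (G.isolateVerts X).Reachable v w}
    have hKX : Disjoint K X :=
      Set.disjoint_left.2 fun _ hw => notMem_of_reachable_isolateVerts hw hvX
    have hK' : ∀ a ∈ K, ∀ b, G.Adj a b → b ∉ X → b ∈ K := fun a ha b hab hb =>
      reachable_isolateVerts_of_adj ha hab (Set.disjoint_left.1 hKX ha) hb
    have hKP : K ⊆ P := fun w hw =>
      hw.mem_of_forall_adj (fun a b hab ha => hP a ha b hab.1 hab.2.2) hv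
    by_cases hKn : Nat.card V ≤ 3 * K.ncard
    · have := hmin K ⟨hKX, hK', hKn⟩
      omega
    have hPK : 3 * (P \ K).ncard < Nat.card V := by
      by_contra! h
      refine (hmin (P \ K) ⟨hPX.mono_left Set.sdiff_subset, fun a ha b hab hb =>
        ⟨hP a ha.1 b hab hb, fun hbK => ha.2 ?_⟩, h⟩).not_gt (Set.ncard_lt_ncard ?_)
      · exact reachable_isolateVerts_of_adj hbK hab.symm hb (Set.disjoint_left.1 hPX ha.1)
      · exact Set.sdiff_ssubset_left_iff.2 ⟨v, hv, SimpleGraph.Reachable.refl _⟩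
    have := Set.ncard_sdiff_add_ncard_of_subset hKP
    omega
  · have := Set.ncard_sdiff_add_ncard_of_subset (Set.subset_compl_iff_disjoint_right.2 hPX)
    omega

end Components

section Split

variable {V : Type} [Finite V] {G : SimpleGraph V}

theorem exists_split_of_separation {A₁ B A₂ : Set V} {m k : ℕ}
    (hA : IsTermSep G Set.univ ∅ ∅ m A₁ B A₂) {CL X CR : Set V}
    (hsep : IsTermSep G Set.univ ∅ ∅ (k + 1) CL X CR)
    (hbal₁ : Nat.card V ≤ 4 * (B.ncard + k + 1) + 8 * (CL ∩ A₁).ncard)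
    (hbal₂ : Nat.card V ≤ 4 * (B.ncard + k + 1) + 8 * (CR ∩ A₂).ncard) :
    ∃ (TL XB TR : Set V) (k1 k2 : ℕ),
      TL ∪ XB ∪ TR = B ∧ Disjoint TL XB ∧ Disjoint TL TR ∧ Disjoint XB TR ∧
      k1 + k2 + XB.ncard ≤ k + 1 ∧
      (∃ L X R, IsTermSep G (A₁ ∪ (B \ XB)) TL TR k1 L X R) ∧
      (∃ L X R, IsTermSep G (A₂ ∪ (B \ XB)) TL TR k2 L X R) ∧
      (∀ L1 X1 R1 L2 X2 R2,
        IsLeftPushed G (A₁ ∪ (B \ XB)) TL TR k1 L1 X1 R1 →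
        IsRightPushed G (A₂ ∪ (B \ XB)) TL TR k2 L2 X2 R2 →
        (L1 ∪ TL ∪ L2) ∪ (X1 ∪ XB ∪ X2) ∪ (R1 ∪ TR ∪ R2) = Set.univ ∧
        Disjoint (L1 ∪ TL ∪ L2) (X1 ∪ XB ∪ X2) ∧
        Disjoint (L1 ∪ TL ∪ L2) (R1 ∪ TR ∪ R2) ∧
        Disjoint (X1 ∪ XB ∪ X2) (R1 ∪ TR ∪ R2) ∧
        TL ⊆ L1 ∪ TL ∪ L2 ∧ TR ⊆ R1 ∪ TR ∪ R2 ∧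
        (∀ u ∈ L1 ∪ TL ∪ L2, ∀ v ∈ R1 ∪ TR ∪ R2, ¬ G.Adj u v) ∧
        (X1 ∪ XB ∪ X2).ncard ≤ k + 1 ∧
        8 * (L1 ∪ TL ∪ L2).ncard ≤ 7 * Nat.card V + 4 * (B.ncard + k + 1) ∧
        8 * (R1 ∪ TR ∪ R2).ncard ≤ 7 * Nat.card V + 4 * (B.ncard + k + 1)) := by
  obtain ⟨hcovC, hCLX, hCLR, hXCR, -, -, -, hXk⟩ := id hsep
  have hX := hA.ncard_eq_add X
  have hB : CL ∩ B ∪ X ∩ B ∪ CR ∩ B = B := by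
    rw [← Set.union_inter_distrib_right, ← Set.union_inter_distrib_right, hcovC, Set.univ_inter]
  have hXW : ∀ A, X ∩ (A ∪ (B \ (X ∩ B))) = X ∩ A := fun A => by
    ext v; simp only [Set.mem_inter_iff, Set.mem_union, Set.mem_sdiff]; tauto
  have hsep' : ∀ A, IsTermSep G (A ∪ (B \ (X ∩ B))) (CL ∩ B) (CR ∩ B) (X ∩ A).ncard
      (CL ∩ (A ∪ (B \ (X ∩ B)))) (X ∩ A) (CR ∩ (A ∪ (B \ (X ∩ B)))) := fun A => by
    rw [← hXW A]
    refine hsep.inter _ (fun v hv => ⟨hv.1, Or.inr ⟨hv.2, fun h => ?_⟩⟩)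
      (fun v hv => ⟨hv.1, Or.inr ⟨hv.2, fun h => ?_⟩⟩)
    · exact Set.disjoint_left.1 hCLX hv.1 h.1
    · exact Set.disjoint_left.1 hXCR h.1 hv.1
  refine ⟨CL ∩ B, X ∩ B, CR ∩ B, (X ∩ A₁).ncard, (X ∩ A₂).ncard, hB,
    hCLX.mono Set.inter_subset_left Set.inter_subset_left,
    hCLR.mono Set.inter_subset_left Set.inter_subset_left,
    hXCR.mono Set.inter_subset_left Set.inter_subset_left, by omega,
    ⟨_, _, _, hsep' A₁⟩, ⟨_, _, _, hsep' A₂⟩, fun L₁ X₁ R₁ L₂ X₂ R₂ h₁ h₂ => ?_⟩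
  -- The pushed sides are at least as large as the restrictions of `CL` and `CR`.
  have hglue := hA.glue hB h₁.1 h₂.1
  have hn := hglue.ncard_eq_add Set.univ
  simp only [Set.univ_inter, Set.ncard_univ] at hn
  have hR₂ : R₂.ncard ≤ (R₁ ∪ CR ∩ B ∪ R₂).ncard := Set.ncard_le_ncard Set.subset_union_right
  have hL₁ : L₁.ncard ≤ (L₁ ∪ CL ∩ B ∪ L₂).ncard :=
    Set.ncard_le_ncard (Set.subset_union_left.trans Set.subset_union_left)
  have hCR := h₂.2 _ _ _ (hsep' A₂)
  have hCL := h₁.2 _ _ _ (hsep' A₁)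
  have hCRA : (CR ∩ A₂).ncard ≤ (CR ∩ (A₂ ∪ (B \ (X ∩ B)))).ncard :=
    Set.ncard_le_ncard (Set.inter_subset_inter_right _ Set.subset_union_left)
  have hCLA : (CL ∩ A₁).ncard ≤ (CL ∩ (A₁ ∪ (B \ (X ∩ B)))).ncard :=
    Set.ncard_le_ncard (Set.inter_subset_inter_right _ Set.subset_union_left)
  obtain ⟨hcov, hLX, hLR, hXR, hTL, hTR, hedge, hcard⟩ := hglue
  exact ⟨hcov, hLX, hLR, hXR, hTL, hTR, hedge, by omega, by omega, by omega⟩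

theorem exists_separation_aligned {A₁ B A₂ : Set V} {m k : ℕ} (htw : TreewidthAtMost G k)
    (hA : IsTermSep G Set.univ ∅ ∅ m A₁ B A₂)
    (hA₁ : 4 * A₁.ncard ≤ 3 * Nat.card V) (hA₂ : 4 * A₂.ncard ≤ 3 * Nat.card V) :
    ∃ CL X CR, IsTermSep G Set.univ ∅ ∅ (k + 1) CL X CR ∧
      Nat.card V ≤ 4 * (B.ncard + k + 1) + 8 * (CL ∩ A₁).ncard ∧
      Nat.card V ≤ 4 * (B.ncard + k + 1) + 8 * (CR ∩ A₂).ncard := by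
  by_cases hsmall : Nat.card V ≤ 4 * (B.ncard + k + 1)
  · exact ⟨Set.univ, ∅, ∅, by simp [IsTermSep], by omega, by omega⟩
  obtain ⟨X, hXk, hK⟩ := htw.exists_small_components
  obtain ⟨P, Q, hPQ, hP, hQ⟩ := exists_balanced_separation_of_components (G := G) X
    fun v hv => by have := hK v hv; omega
  have hn := hA.ncard_eq_add Set.univ
  have hn' := hPQ.ncard_eq_add Set.univ
  have hP' := hA.ncard_eq_add P
  have hQ' := hA.ncard_eq_add Q
  have hA₁' := hPQ.ncard_eq_add A₁
  have hA₂' := hPQ.ncard_eq_add A₂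
  simp only [Set.univ_inter, Set.ncard_univ] at hn hn'
  rw [Set.inter_comm A₁ P, Set.inter_comm A₁ Q] at hA₁'
  rw [Set.inter_comm A₂ P, Set.inter_comm A₂ Q] at hA₂'
  have := Set.ncard_le_ncard (Set.inter_subset_right (s := P) (t := B))
  have := Set.ncard_le_ncard (Set.inter_subset_right (s := Q) (t := B))
  have := Set.ncard_le_ncard (Set.inter_subset_right (s := A₁) (t := X))
  have := Set.ncard_le_ncard (Set.inter_subset_right (s := A₂) (t := X))
  -- `P`, `Q` have at least `n/3 - |X|` vertices and `A₁`, `A₂` at least `n/4 - |B|`; so if `P`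
  -- meets `A₁` or `Q` meets `A₂` in fewer than `n/8 - (|B| + k + 1)/2` vertices, then `Q` meets
  -- `A₁` and `P` meets `A₂` in at least that many.
  by_cases hPQ' : Nat.card V ≤ 4 * (B.ncard + k + 1) + 8 * (P ∩ A₁).ncard ∧
      Nat.card V ≤ 4 * (B.ncard + k + 1) + 8 * (Q ∩ A₂).ncard
  · exact ⟨P, X, Q, hPQ.mono_order hXk, hPQ'⟩
  · exact ⟨Q, X, P, hPQ.symm.mono_order hXk, by omega, by omega⟩

end Split

theorem statement8 {V : Type} [Fintype V] (G : SimpleGraph V) (k : ℕ)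
    (htw : TreewidthAtMost G k)
    (A1 B A2 : Set V)
    (hpart : A1 ∪ B ∪ A2 = Set.univ)
    (h1B : Disjoint A1 B) (h12 : Disjoint A1 A2) (hB2 : Disjoint B A2)
    (hedge : ∀ u ∈ A1, ∀ v ∈ A2, ¬ G.Adj u v)
    (hA1 : 4 * A1.ncard ≤ 3 * Fintype.card V)
    (hA2 : 4 * A2.ncard ≤ 3 * Fintype.card V) :
    ∃ (TL XB TR : Set V) (k1 k2 : ℕ),
      TL ∪ XB ∪ TR = B ∧ Disjoint TL XB ∧ Disjoint TL TR ∧ Disjoint XB TR ∧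
      k1 + k2 + XB.ncard ≤ k + 1 ∧
      (∃ L X R, IsTermSep G (A1 ∪ (B \ XB)) TL TR k1 L X R) ∧
      (∃ L X R, IsTermSep G (A2 ∪ (B \ XB)) TL TR k2 L X R) ∧
      (∀ L1 X1 R1 L2 X2 R2,
        IsLeftPushed G (A1 ∪ (B \ XB)) TL TR k1 L1 X1 R1 →
        IsRightPushed G (A2 ∪ (B \ XB)) TL TR k2 L2 X2 R2 →
        (L1 ∪ TL ∪ L2) ∪ (X1 ∪ XB ∪ X2) ∪ (R1 ∪ TR ∪ R2) = Set.univ ∧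
        Disjoint (L1 ∪ TL ∪ L2) (X1 ∪ XB ∪ X2) ∧
        Disjoint (L1 ∪ TL ∪ L2) (R1 ∪ TR ∪ R2) ∧
        Disjoint (X1 ∪ XB ∪ X2) (R1 ∪ TR ∪ R2) ∧
        TL ⊆ L1 ∪ TL ∪ L2 ∧ TR ⊆ R1 ∪ TR ∪ R2 ∧
        (∀ u ∈ L1 ∪ TL ∪ L2, ∀ v ∈ R1 ∪ TR ∪ R2, ¬ G.Adj u v) ∧
        (X1 ∪ XB ∪ X2).ncard ≤ k + 1 ∧
        8 * (L1 ∪ TL ∪ L2).ncard ≤ 7 * Fintype.card V + 4 * (B.ncard + k + 1) ∧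
        8 * (R1 ∪ TR ∪ R2).ncard ≤ 7 * Fintype.card V + 4 * (B.ncard + k + 1)) := by
  have hA : IsTermSep G Set.univ ∅ ∅ B.ncard A1 B A2 :=
    ⟨hpart, h1B, h12, hB2, Set.empty_subset _, Set.empty_subset _, hedge, le_rfl⟩
  rw [← Nat.card_eq_fintype_card] at hA1 hA2 ⊢
  obtain ⟨CL, X, CR, hsep, hbal₁, hbal₂⟩ := exists_separation_aligned htw hA hA1 hA2
  exact exists_split_of_separation hA hsep hbal₁ hbal₂
end

section
/- Let G be a finite graph, S ⊆ V(G), and X ⊆ V(G) a set such that every connected component of G − X contains at most |S|/2 vertices of S. Then there exists a partition (L, R) of V(G) ∖ X such that no edge of G joins a vertex of L to a vertex of R, |L ∩ S| ≤ (2/3)|S|, and |R ∩ S| ≤ (2/3)|S|. -/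
/-!
Distribute the components of `G − X` between the two sides. Among the sets `T` of components
whose total `S`-weight is at most `2|S|/3`, take one of maximal weight. If the complement
weighed more than `2|S|/3`, it would contain a component `c` of positive weight. Since `c` weighs
at most `|S|/2`, the set `{c}` is admissible, so `c` weighs no more than `T`. But `T ∪ {c}` is
not admissible, so `T` weighs more than `|S|/3`, and the complement weighs less than `2|S|/3`.
-/

open SimpleGraph

theorem Finset.exists_three_mul_sum_le_and_compl {ι : Type*} [Fintype ι] [DecidableEq ι]
    (w : ι → ℕ) {s : ℕ} (hw : ∀ i, 2 * w i ≤ s) (hsum : ∑ i, w i ≤ s) :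
    ∃ T : Finset ι, 3 * ∑ i ∈ T, w i ≤ 2 * s ∧ 3 * ∑ i ∈ Tᶜ, w i ≤ 2 * s := by
  have hadm : (univ.filter fun T : Finset ι => 3 * ∑ i ∈ T, w i ≤ 2 * s).Nonempty :=
    ⟨∅, by simp⟩
  obtain ⟨T, hT, hmax⟩ := exists_max_image _ (fun T => ∑ i ∈ T, w i) hadm
  simp only [mem_filter, mem_univ, true_and] at hT hmax
  refine ⟨T, hT, ?_⟩
  have htot := sum_add_sum_compl T w
  by_contra! hTc
  obtain ⟨c, hc, hwc⟩ : ∃ c ∈ Tᶜ, w c ≠ 0 := exists_ne_zero_of_sum_ne_zero (by omega)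
  have hcT : c ∉ T := mem_compl.mp hc
  have hc_le : w c ≤ ∑ i ∈ T, w i := by
    simpa using hmax {c} (by rw [sum_singleton]; linarith [hw c])
  have hins : ¬ 3 * ∑ i ∈ insert c T, w i ≤ 2 * s := fun h' => by
    have := hmax _ h'
    rw [sum_insert hcT] at this
    omega
  rw [sum_insert hcT] at hins
  omega

theorem Set.ncard_preimage_inter_eq_sum {α β : Type*} [Finite α] (f : α → β) (T : Finset β)
    (A : Set α) : (f ⁻¹' T ∩ A).ncard = ∑ b ∈ T, (f ⁻¹' {b} ∩ A).ncard := by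
  have hU : f ⁻¹' T ∩ A = ⋃ b ∈ (T : Set β), f ⁻¹' {b} ∩ A := by
    ext x; simp
  rw [hU, Set.Finite.ncard_biUnion T.finite_toSet (fun _ _ => Set.toFinite _),
    finsum_mem_coe_finset]
  intro b _ b' _ hbb'
  exact Disjoint.mono Set.inter_subset_left Set.inter_subset_left
    ((Set.disjoint_singleton.mpr hbb').preimage f)

theorem Set.ncard_image_val_inter {α : Type*} {p : Set α} (P : Set p) (S : Set α) :
    (Subtype.val '' P ∩ S).ncard = (P ∩ Subtype.val ⁻¹' S).ncard := by
  rw [← Set.image_inter_preimage, Set.ncard_image_of_injective _ Subtype.val_injective]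

theorem SimpleGraph.not_adj_of_connectedComponentMk_mem_of_not_mem {W : Type*}
    {H : SimpleGraph W} {T : Set H.ConnectedComponent} {u v : W} (hu : H.connectedComponentMk u ∈ T)
    (hv : H.connectedComponentMk v ∉ T) : ¬ H.Adj u v :=
  fun huv => hv (ConnectedComponent.connectedComponentMk_eq_of_adj huv ▸ hu)

theorem statement10 {V : Type} [Fintype V] (G : SimpleGraph V) (S X : Set V)
    (h : BalancedSSep G S X) :
    ∃ L R : Set V,
      L ∪ R = Xᶜ ∧ Disjoint L R ∧
      (∀ u ∈ L, ∀ v ∈ R, ¬ G.Adj u v) ∧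
      3 * (L ∩ S).ncard ≤ 2 * S.ncard ∧
      3 * (R ∩ S).ncard ≤ 2 * S.ncard := by
  classical
  set H := G.induce Xᶜ
  set mk := H.connectedComponentMk
  have hside (T : Finset H.ConnectedComponent) :
      (Subtype.val '' (mk ⁻¹' T) ∩ S).ncard = ∑ c ∈ T, (Subtype.val '' c.supp ∩ S).ncard := by
    simp only [Set.ncard_image_val_inter]
    exact Set.ncard_preimage_inter_eq_sum mk T _
  have hsum : ∑ c : H.ConnectedComponent, (Subtype.val '' c.supp ∩ S).ncard ≤ S.ncard := by
    rw [← hside]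
    exact Set.ncard_le_ncard Set.inter_subset_right
  obtain ⟨T, hT, hTc⟩ := Finset.exists_three_mul_sum_le_and_compl _ h hsum
  refine ⟨Subtype.val '' (mk ⁻¹' T), Subtype.val '' (mk ⁻¹' ↑Tᶜ), ?_, ?_, ?_, ?_, ?_⟩
  · rw [Finset.coe_compl, Set.preimage_compl, ← Set.image_union, Set.union_compl_self,
      Set.image_univ, Subtype.range_coe]
  · rw [Finset.coe_compl, Set.preimage_compl]
    exact (Set.disjoint_image_iff Subtype.val_injective).mpr disjoint_compl_right
  · rintro _ ⟨u, hu, rfl⟩ _ ⟨v, hv, rfl⟩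
    exact not_adj_of_connectedComponentMk_mem_of_not_mem (H := H) hu (Finset.mem_compl.mp hv)
  · rwa [hside]
  · rwa [hside]
end

section
/- Let G be a finite graph with treewidth at most k and let S ⊆ V(G). Then there exists a partition (L, X, R) of V(G) with |X| ≤ k+1 such that no edge of G joins a vertex of L to a vertex of R, |L ∩ S| ≤ (2/3)|S|, and |R ∩ S| ≤ (2/3)|S|. -/
/-!
Some bag `X` of the decomposition leaves no component of `G - X` with more than half of `S`.
Otherwise every node `i` has such a heavy component `C i`, and all bags meeting `C i` lie
beyond one neighbour `j` of `i`; the heavy component of `j` must then lie inside `C i`, so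
walking through the tree either shrinks the heavy component or approaches a bag meeting it,
which cannot go on forever. Grouping the light components of `G - X` greedily into `L` and
`R` then gives the balanced partition.
-/

open SimpleGraph

namespace SimpleGraph

variable {V : Type*}

/-- `G - X`, with the vertices of `X` kept as isolated vertices so that it lives on `V`. -/
def deleteVerts (G : SimpleGraph V) (X : Set V) : SimpleGraph V where
  Adj u v := G.Adj u v ∧ u ∉ X ∧ v ∉ X
  symm := ⟨fun _ _ h => ⟨h.1.symm, h.2.2, h.2.1⟩⟩
  loopless := ⟨fun v h => G.loopless.irrefl v h.1⟩

def delComponent (G : SimpleGraph V) (X : Set V) (v : V) : Set V :=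
  {w | (G.deleteVerts X).Reachable v w}

variable {G : SimpleGraph V} {X Y : Set V} {u v w : V}

@[simp]
lemma deleteVerts_adj : (G.deleteVerts X).Adj u v ↔ G.Adj u v ∧ u ∉ X ∧ v ∉ X := Iff.rfl

lemma deleteVerts_le : G.deleteVerts X ≤ G := fun _ _ h => (deleteVerts_adj.1 h).1

lemma deleteVerts_le_deleteEdges {x : V} (hx : x ∈ X) (y : V) :
    G.deleteVerts X ≤ G.deleteEdges {s(x, y)} := by
  intro a b h
  obtain ⟨hab, ha, hb⟩ := deleteVerts_adj.1 h
  refine (deleteEdges_adj ..).2 ⟨hab, fun he => ?_⟩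
  rcases Sym2.mem_iff.1 (he ▸ Sym2.mem_mk_left x y : x ∈ s(a, b)) with rfl | rfl
  exacts [ha hx, hb hx]

lemma Walk.reachable_deleteVerts (p : G.Walk u w) (h : ∀ x ∈ p.support, x ∉ Y) :
    (G.deleteVerts Y).Reachable u w := by
  induction p with
  | nil => rfl
  | cons hadj q ih =>
    simp only [Walk.support_cons, List.mem_cons, forall_eq_or_imp] at h
    have hadj' : (G.deleteVerts Y).Adj _ _ :=
      deleteVerts_adj.2 ⟨hadj, h.1, h.2 _ q.start_mem_support⟩
    exact hadj'.reachable.trans (ih h.2)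

lemma mem_delComponent_self : v ∈ G.delComponent X v := Reachable.refl v

lemma delComponent_eq_of_mem (h : w ∈ G.delComponent X v) :
    G.delComponent X w = G.delComponent X v :=
  Set.ext fun _ => ⟨h.trans, h.symm.trans⟩

lemma delComponent_eq_or_disjoint (u v : V) :
    G.delComponent X u = G.delComponent X v ∨
      Disjoint (G.delComponent X u) (G.delComponent X v) := by
  refine or_iff_not_imp_right.2 fun h => ?_
  obtain ⟨w, hu, hv⟩ := Set.not_disjoint_iff.1 h
  exact (delComponent_eq_of_mem hu).symm.trans (delComponent_eq_of_mem hv)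

lemma delComponent_subset_compl (hv : v ∉ X) : G.delComponent X v ⊆ Xᶜ := by
  rintro w ⟨p⟩
  cases p.reverse with
  | nil => exact hv
  | cons h _ => exact (deleteVerts_adj.1 h).2.1

lemma delComponent_subset_delComponent (h : Disjoint (G.delComponent X v) Y) :
    G.delComponent X v ⊆ G.delComponent Y v := by
  classical
  rintro w ⟨p⟩
  refine (p.mapLe deleteVerts_le).reachable_deleteVerts fun x hx => ?_
  rw [Walk.support_mapLe_eq_support] at hx
  exact h.notMem_of_mem_left ⟨p.takeUntil x hx⟩

lemma IsAcyclic.not_reachable_deleteVerts_of_adj {i j s : V} (hG : G.IsAcyclic)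
    (hij : G.Adj i j) (hj : (G.deleteVerts {i}).Reachable j s)
    (hi : (G.deleteVerts {j}).Reachable i s) : False := by
  have hbridge := isBridge_iff.1 (isAcyclic_iff_forall_adj_isBridge.1 hG hij)
  have hi' := hi.mono (deleteVerts_le_deleteEdges (Set.mem_singleton j) i)
  rw [Sym2.eq_swap] at hi'
  exact hbridge (hi'.trans (hj.mono (deleteVerts_le_deleteEdges (Set.mem_singleton i) j)).symm)

lemma Connected.exists_adj_dist_lt {i t : V} (hG : G.Connected) (hit : i ≠ t) :
    ∃ j, G.Adj i j ∧ G.dist j t < G.dist i t ∧ (G.deleteVerts {i}).Reachable j t := by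
  obtain ⟨p, hp, hlen⟩ := hG.exists_path_of_dist i t
  cases p with
  | nil => exact absurd rfl hit
  | cons hij q =>
    rw [Walk.cons_isPath_iff] at hp
    refine ⟨_, hij, ?_, q.reachable_deleteVerts fun x hx hxi => hp.2 (hxi ▸ hx)⟩
    have := dist_le q
    rw [Walk.length_cons] at hlen
    omega

end SimpleGraph

def IsHeavy {V : Type*} (S A : Set V) : Prop := S.ncard < 2 * (A ∩ S).ncard

def IsBalancedSep {V : Type*} (G : SimpleGraph V) (S X : Set V) : Prop :=
  ∀ v ∉ X, ¬ IsHeavy S (G.delComponent X v)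

section Weight

variable {V : Type*} [Finite V] {S A B : Set V}

lemma ncard_inter_add_ncard_inter_le (h : Disjoint A B) :
    (A ∩ S).ncard + (B ∩ S).ncard ≤ S.ncard := by
  rw [← Set.ncard_union_eq (h.mono Set.inter_subset_left Set.inter_subset_left)]
  exact Set.ncard_le_ncard (Set.union_subset Set.inter_subset_right Set.inter_subset_right)

lemma ncard_union_inter (h : Disjoint A B) :
    ((A ∪ B) ∩ S).ncard = (A ∩ S).ncard + (B ∩ S).ncard := by
  rw [Set.union_inter_distrib_right,
    Set.ncard_union_eq (h.mono Set.inter_subset_left Set.inter_subset_left)]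

lemma IsHeavy.mono (hA : IsHeavy S A) (hAB : A ⊆ B) : IsHeavy S B :=
  hA.trans_le (Nat.mul_le_mul_left 2 (Set.ncard_le_ncard (Set.inter_subset_inter_left S hAB)))

lemma IsHeavy.not_disjoint (hA : IsHeavy S A) (hB : IsHeavy S B) : ¬ Disjoint A B := fun h => by
  have := ncard_inter_add_ncard_inter_le (S := S) h
  unfold IsHeavy at hA hB
  omega

end Weight

namespace IsTreeDecomp

variable {V ι : Type} {G : SimpleGraph V} {T : SimpleGraph ι} {bag : ι → Set V}

section

variable (hd : IsTreeDecomp G T bag)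
include hd

lemma reachable_deleteVerts_of_mem_bag {i s s' : ι} {v : V} (hv : v ∉ bag i)
    (hs : v ∈ bag s) (hs' : v ∈ bag s') : (T.deleteVerts {i}).Reachable s s' := by
  let hsub : T.induce {t | v ∈ bag t} →g T.deleteVerts {i} :=
    ⟨Subtype.val, fun {a b} hab =>
      deleteVerts_adj.2 ⟨hab, fun h => hv (h ▸ a.2), fun h => hv (h ▸ b.2)⟩⟩
  exact (hd.2.2.2 v ⟨s, hs⟩ ⟨s', hs'⟩).map hsub

lemma reachable_deleteVerts_of_adj {i s s' : ι} {u w : V}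
    (hadj : (G.deleteVerts (bag i)).Adj u w) (hs : u ∈ bag s) (hs' : w ∈ bag s') :
    (T.deleteVerts {i}).Reachable s s' := by
  obtain ⟨huw, hu, hw⟩ := deleteVerts_adj.1 hadj
  obtain ⟨t, hut, hwt⟩ := hd.2.2.1 u w huw
  exact (hd.reachable_deleteVerts_of_mem_bag hu hs hut).trans
    (hd.reachable_deleteVerts_of_mem_bag hw hwt hs')

lemma reachable_deleteVerts_of_reachable {i s s' : ι} {u w : V} (hu : u ∉ bag i)
    (huw : (G.deleteVerts (bag i)).Reachable u w) (hs : u ∈ bag s) (hs' : w ∈ bag s') :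
    (T.deleteVerts {i}).Reachable s s' := by
  obtain ⟨p⟩ := huw
  induction p generalizing s with
  | nil => exact hd.reachable_deleteVerts_of_mem_bag hu hs hs'
  | cons hadj q ih =>
    obtain ⟨t, ht⟩ := hd.2.1 _
    exact (hd.reachable_deleteVerts_of_adj hadj hs ht).trans
      (ih (deleteVerts_adj.1 hadj).2.2 ht hs')

lemma reachable_deleteVerts_of_mem_delComponent {i s s' : ι} {v x y : V} (hv : v ∉ bag i)
    (hx : x ∈ G.delComponent (bag i) v) (hy : y ∈ G.delComponent (bag i) v)
    (hs : x ∈ bag s) (hs' : y ∈ bag s') : (T.deleteVerts {i}).Reachable s s' := by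
  obtain ⟨t, ht⟩ := hd.2.1 v
  exact (hd.reachable_deleteVerts_of_reachable hv hx ht hs).symm.trans
    (hd.reachable_deleteVerts_of_reachable hv hy ht hs')

end

variable [Finite V] {S : Set V}

/-- With `C i` the heavy component of `c i`: the heavy component of the neighbour `j` of `i`
towards `t` cannot lie on the side of `i`, since it would then be disjoint from `C i`; so it
lies inside `C i`. -/
lemma exists_lex_lt_of_heavy (hd : IsTreeDecomp G T bag) {c : ι → V} (hc : ∀ i, c i ∉ bag i)
    (heavy : ∀ i, IsHeavy S (G.delComponent (bag i) (c i))) {i t : ι}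
    (hit : (G.delComponent (bag i) (c i) ∩ bag t).Nonempty) :
    ∃ j t', (G.delComponent (bag j) (c j) ∩ bag t').Nonempty ∧
      toLex ((G.delComponent (bag j) (c j)).ncard, T.dist j t') <
        toLex ((G.delComponent (bag i) (c i)).ncard, T.dist i t) := by
  set C := fun i => G.delComponent (bag i) (c i)
  obtain ⟨w, hwC, hwt⟩ := hit
  have hit : i ≠ t := fun h => delComponent_subset_compl (hc i) hwC (h ▸ hwt)
  obtain ⟨j, hij, hdist, hjt⟩ := hd.1.1.exists_adj_dist_lt hit
  have side_i : ∀ x ∈ C i, ∀ s, x ∈ bag s → (T.deleteVerts {i}).Reachable j s :=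
    fun x hx s hs =>
      hjt.trans (hd.reachable_deleteVerts_of_mem_delComponent (hc i) hwC hx hwt hs)
  obtain ⟨s₀, hs₀⟩ := hd.2.1 (c j)
  have side_j : ∀ x ∈ C j, ∀ s, x ∈ bag s → (T.deleteVerts {j}).Reachable s₀ s :=
    fun x hx s hs =>
      hd.reachable_deleteVerts_of_mem_delComponent (hc j) mem_delComponent_self hx hs₀ hs
  by_cases hback : (T.deleteVerts {j}).Reachable s₀ i
  · refine absurd (Set.disjoint_left.2 fun x hxi hxj => ?_) ((heavy i).not_disjoint (heavy j))
    obtain ⟨s, hs⟩ := hd.2.1 x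
    exact hd.1.2.not_reachable_deleteVerts_of_adj hij (side_i x hxi s hs)
      (hback.symm.trans (side_j x hxj s hs))
  have hCj_bag_i : Disjoint (C j) (bag i) :=
    Set.disjoint_left.2 fun x hx hxi => hback (side_j x hx i hxi)
  have hCj_sub : C j ⊆ G.delComponent (bag i) (c j) :=
    delComponent_subset_delComponent hCj_bag_i
  have hCj_le : C j ⊆ C i := by
    rwa [((delComponent_eq_or_disjoint _ _).resolve_right
      (((heavy j).mono hCj_sub).not_disjoint (heavy i)))] at hCj_sub
  rcases hCj_le.eq_or_ssubset with heq | hlt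
  · replace heq : G.delComponent (bag j) (c j) = G.delComponent (bag i) (c i) := heq
    exact ⟨j, t, heq ▸ ⟨w, hwC, hwt⟩,
      Prod.Lex.toLex_lt_toLex.2 (.inr ⟨by rw [heq], hdist⟩)⟩
  · exact ⟨j, s₀, ⟨c j, mem_delComponent_self, hs₀⟩,
      Prod.Lex.toLex_lt_toLex.2 (.inl (Set.ncard_lt_ncard hlt))⟩

lemma exists_isBalancedSep_bag [Nonempty ι] (hd : IsTreeDecomp G T bag) (S : Set V) :
    ∃ i, IsBalancedSep G S (bag i) := by
  by_contra! h
  simp only [IsBalancedSep, not_forall, not_not] at h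
  choose c hc heavy using h
  obtain ⟨i₀⟩ := ‹Nonempty ι›
  obtain ⟨t₀, ht₀⟩ := hd.2.1 (c i₀)
  let μ : ι × ι → ℕ ×ₗ ℕ := fun p =>
    toLex ((G.delComponent (bag p.1) (c p.1)).ncard, T.dist p.1 p.2)
  obtain ⟨⟨i, t⟩, hit, hmin⟩ := (InvImage.wf μ wellFounded_lt).has_min
    {p | (G.delComponent (bag p.1) (c p.1) ∩ bag p.2).Nonempty}
    ⟨(i₀, t₀), c i₀, mem_delComponent_self, ht₀⟩
  obtain ⟨j, t', hjt', hlt⟩ := hd.exists_lex_lt_of_heavy hc heavy hit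
  exact hmin (j, t') hjt' hlt

end IsTreeDecomp

lemma TreewidthAtMost.exists_isBalancedSep {V : Type} [Finite V] {G : SimpleGraph V} {k : ℕ}
    (h : TreewidthAtMost G k) (S : Set V) : ∃ X, X.ncard ≤ k + 1 ∧ IsBalancedSep G S X := by
  obtain ⟨ι, T, bag, hd, hcard⟩ := h
  cases isEmpty_or_nonempty ι with
  | inl => exact ⟨∅, by simp, fun v _ => isEmptyElim (hd.2.1 v).choose⟩
  | inr =>
    obtain ⟨i, hi⟩ := hd.exists_isBalancedSep_bag S
    exact ⟨bag i, hcard i, hi⟩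

namespace SimpleGraph

variable {V : Type*} {G : SimpleGraph V} {X L M : Set V} {v : V}

def IsUnionOfDelComponents (G : SimpleGraph V) (X L : Set V) : Prop :=
  L ⊆ Xᶜ ∧ ∀ v ∈ L, G.delComponent X v ⊆ L

lemma isUnionOfDelComponents_delComponent (hv : v ∉ X) :
    G.IsUnionOfDelComponents X (G.delComponent X v) :=
  ⟨delComponent_subset_compl hv, fun _ hw => (delComponent_eq_of_mem hw).subset⟩

lemma IsUnionOfDelComponents.union (hL : G.IsUnionOfDelComponents X L)
    (hM : G.IsUnionOfDelComponents X M) : G.IsUnionOfDelComponents X (L ∪ M) :=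
  ⟨Set.union_subset hL.1 hM.1, fun v hv => hv.elim
    (fun h => (hL.2 v h).trans Set.subset_union_left)
    (fun h => (hM.2 v h).trans Set.subset_union_right)⟩

lemma IsUnionOfDelComponents.disjoint_delComponent (hL : G.IsUnionOfDelComponents X L)
    (hv : v ∉ L) : Disjoint L (G.delComponent X v) :=
  Set.disjoint_left.2 fun w hwL hwv =>
    hv (hL.2 w hwL (delComponent_eq_of_mem hwv ▸ mem_delComponent_self))

lemma IsUnionOfDelComponents.not_adj (hL : G.IsUnionOfDelComponents X L) {u : V} (hu : u ∈ L)
    (hvX : v ∉ X) (hvL : v ∉ L) : ¬ G.Adj u v := fun h =>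
  hvL (hL.2 u hu (Adj.reachable (deleteVerts_adj.2 ⟨h, hL.1 hu, hvX⟩)))

end SimpleGraph

/-- Take `L` to be a union of components of `G - X` carrying as much of `S` as possible
subject to `|L ∩ S| ≤ 2|S|/3`. If the rest carried more than `2|S|/3`, then
`|L ∩ S| < |S|/3`, and adding to `L` a component `C` meeting the rest in `S` would overshoot;
but `C` alone is admissible, so `|C ∩ S| ≤ |L ∩ S|` and `|L ∩ S| > |S|/3`. -/
theorem IsBalancedSep.exists_partition {V : Type*} [Finite V] {G : SimpleGraph V} {S X : Set V}
    (hX : IsBalancedSep G S X) :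
    ∃ L R : Set V,
      L ∪ X ∪ R = Set.univ ∧ Disjoint L X ∧ Disjoint L R ∧ Disjoint X R ∧
      (∀ u ∈ L, ∀ v ∈ R, ¬ G.Adj u v) ∧
      3 * (L ∩ S).ncard ≤ 2 * S.ncard ∧
      3 * (R ∩ S).ncard ≤ 2 * S.ncard := by
  obtain ⟨L, ⟨hL, hLS⟩, hmax⟩ := Set.exists_max_image
    {L | G.IsUnionOfDelComponents X L ∧ 3 * (L ∩ S).ncard ≤ 2 * S.ncard}
    (fun L => (L ∩ S).ncard) (Set.toFinite _)
    ⟨∅, ⟨by simp [IsUnionOfDelComponents], by simp⟩⟩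
  refine ⟨L, Xᶜ \ L, ?_, Set.disjoint_left.2 fun v hv => hL.1 hv, Set.disjoint_sdiff_right,
    Set.disjoint_left.2 fun v hv hv' => hv'.1 hv, fun u hu v hv => hL.not_adj hu hv.1 hv.2,
    hLS, ?_⟩
  · ext v
    by_cases v ∈ X <;> by_cases v ∈ L <;> simp_all
  by_contra! hR
  obtain ⟨v, ⟨hvX, hvL⟩, hvS⟩ : ((Xᶜ \ L) ∩ S).Nonempty :=
    Set.nonempty_of_ncard_ne_zero (by omega)
  set C := G.delComponent X v
  have hC : G.IsUnionOfDelComponents X C := isUnionOfDelComponents_delComponent hvX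
  have hLC : Disjoint L C := hL.disjoint_delComponent hvL
  have hC_light : 2 * (C ∩ S).ncard ≤ S.ncard := not_lt.1 (hX v hvX)
  have hC_le : (C ∩ S).ncard ≤ (L ∩ S).ncard := hmax C ⟨hC, by omega⟩
  have hC_pos : 0 < (C ∩ S).ncard :=
    (Set.ncard_pos (Set.toFinite _)).2 ⟨v, mem_delComponent_self, hvS⟩
  have hLC_big : 2 * S.ncard < 3 * ((L ∪ C) ∩ S).ncard := by
    by_contra! hle
    have := hmax (L ∪ C) ⟨hL.union hC, hle⟩
    rw [ncard_union_inter hLC] at this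
    omega
  rw [ncard_union_inter hLC] at hLC_big
  have := ncard_inter_add_ncard_inter_le (S := S) (Set.disjoint_sdiff_right : Disjoint L (Xᶜ \ L))
  omega

theorem statement11 {V : Type} [Fintype V] (G : SimpleGraph V) (k : ℕ) (S : Set V)
    (h : TreewidthAtMost G k) :
    ∃ L X R : Set V,
      L ∪ X ∪ R = Set.univ ∧ Disjoint L X ∧ Disjoint L R ∧ Disjoint X R ∧
      X.ncard ≤ k + 1 ∧
      (∀ u ∈ L, ∀ v ∈ R, ¬ G.Adj u v) ∧
      3 * (L ∩ S).ncard ≤ 2 * S.ncard ∧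
      3 * (R ∩ S).ncard ≤ 2 * S.ncard := by
  obtain ⟨X, hXcard, hX⟩ := h.exists_isBalancedSep S
  obtain ⟨L, R, hcover, hLX, hLR, hXR, hno_edge, hL, hR⟩ := hX.exists_partition
  exact ⟨L, X, R, hcover, hLX, hLR, hXR, hXcard, hno_edge, hL, hR⟩
end

section
/- Let G be a finite graph of treewidth at most k and let (A_1, B, A_2) be a partition of V(G) with no edge of G between A_1 and A_2, |A_1|, |A_2| ≤ (3/4)|V(G)|, and |B| ≤ t+1, and suppose |V(G)| ≥ 36(k + t + 2). Then there exists a partition (L, X, R) of V(G) with no edge of G between L and R, |X| ≤ k+1, and |L|, |R| ≤ (8/9)|V(G)|. -/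
/-!
Some bag `X` of a tree decomposition is a balanced separator: every component of `G - X` has at
most `n / 2` vertices. Otherwise each node `i` has a component `C i` of `G - bag i` with more
than `n / 2` vertices. Moving from `i` to its neighbour `j` on a shortest path towards a bag
meeting `C i` gives `C j ⊆ C i`, and if `C j = C i` then `j` is closer to that bag; so the pair
(`|C i|`, distance) would decrease lexicographically forever.

Then let `L` be a largest union of components of `G - X` with `|L| ≤ 3n / 4`. A component `C`
outside `L` does not fit, so `|L| > 3n / 4 - |C| ≥ n / 4` and the rest has fewer than `3n / 4`
vertices.
-/

open SimpleGraph

namespace SimpleGraph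

variable {V : Type*} (G : SimpleGraph V)

/-- The vertex set of the component of `w` in `G - X` (empty when `w ∈ X`). -/
def reachOutside (X : Set V) (w : V) : Set V :=
  {v | ∃ p : G.Walk w v, ∀ x ∈ p.support, x ∉ X}

variable {G} {X Y : Set V} {u v w : V}

lemma mem_reachOutside_self (h : w ∉ X) : w ∈ G.reachOutside X w :=
  ⟨.nil, by simpa using h⟩

lemma notMem_of_mem_reachOutside (h : v ∈ G.reachOutside X w) : v ∉ X :=
  let ⟨p, hp⟩ := h
  hp v p.end_mem_support

lemma mem_reachOutside_trans (h₁ : v ∈ G.reachOutside X w) (h₂ : u ∈ G.reachOutside X v) :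
    u ∈ G.reachOutside X w := by
  obtain ⟨p, hp⟩ := h₁
  obtain ⟨q, hq⟩ := h₂
  refine ⟨p.append q, fun x hx => ?_⟩
  rcases (Walk.mem_support_append_iff _ _).1 hx with hx | hx
  exacts [hp x hx, hq x hx]

lemma mem_reachOutside_symm (h : v ∈ G.reachOutside X w) : w ∈ G.reachOutside X v :=
  let ⟨p, hp⟩ := h
  ⟨p.reverse, by simpa using hp⟩

lemma reachOutside_eq_of_mem (h : v ∈ G.reachOutside X w) :
    G.reachOutside X v = G.reachOutside X w :=
  Set.ext fun _ =>
    ⟨mem_reachOutside_trans h, mem_reachOutside_trans (mem_reachOutside_symm h)⟩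

lemma mem_reachOutside_of_adj (h : u ∈ G.reachOutside X w) (huv : G.Adj u v) (hv : v ∉ X) :
    v ∈ G.reachOutside X w := by
  refine mem_reachOutside_trans h ⟨.cons huv .nil, fun x hx => ?_⟩
  rcases List.mem_cons.1 hx with rfl | hx
  · exact notMem_of_mem_reachOutside h
  · obtain rfl : x = v := by simpa using hx
    exact hv

lemma Walk.support_subset_reachOutside (p : G.Walk w v) (hp : ∀ x ∈ p.support, x ∉ X) :
    ∀ x ∈ p.support, x ∈ G.reachOutside X w := by
  classical
  exact fun x hx => ⟨p.takeUntil x hx, fun y hy => hp y (p.support_takeUntil_subset_support hx hy)⟩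

lemma reachOutside_subset_of_disjoint (h : Disjoint (G.reachOutside X w) Y) :
    G.reachOutside X w ⊆ G.reachOutside Y w := by
  rintro v ⟨p, hp⟩
  exact ⟨p, fun x hx => Set.disjoint_left.1 h (p.support_subset_reachOutside hp x hx)⟩

lemma mem_reachOutside_of_induce_connected {S : Set V} (hS : (G.induce S).Connected)
    (hSX : Disjoint S X) (hv : v ∈ S) (hw : w ∈ S) : w ∈ G.reachOutside X v := by
  obtain ⟨q⟩ := hS.preconnected ⟨v, hv⟩ ⟨w, hw⟩
  refine ⟨q.map (Embedding.induce S).toHom, fun x hx => ?_⟩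
  obtain ⟨y, -, rfl⟩ := List.mem_map.1 (Walk.support_map _ q ▸ hx)
  exact Set.disjoint_left.1 hSX y.2

lemma IsAcyclic.disjoint_reachOutside_of_adj (hG : G.IsAcyclic) (h : G.Adj u v) :
    Disjoint (G.reachOutside {v} u) (G.reachOutside {u} v) := by
  refine Set.disjoint_left.2 fun x ⟨p, hp⟩ ⟨q, hq⟩ => ?_
  have hbridge := isBridge_iff_forall_walk_mem_edges.1 (isAcyclic_iff_forall_isBridge.1 hG h)
  have he := hbridge (p.append q.reverse)
  rw [Walk.edges_append, List.mem_append] at he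
  rcases he with he | he
  · exact hp v (p.snd_mem_support_of_mem_edges he) rfl
  · exact hq u (by simpa using q.reverse.fst_mem_support_of_mem_edges he) rfl

lemma Reachable.exists_adj_dist_lt (hr : G.Reachable u v) (hne : u ≠ v) :
    ∃ w, G.Adj u w ∧ v ∈ G.reachOutside {u} w ∧ G.dist w v < G.dist u v := by
  obtain ⟨p, hpath, hlen⟩ := hr.exists_path_of_dist
  cases p with
  | nil => exact absurd rfl hne
  | cons huw q =>
    rw [Walk.cons_isPath_iff] at hpath
    refine ⟨_, huw, ⟨q, fun x hx hxu => hpath.2 (hxu ▸ hx)⟩, ?_⟩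
    have := dist_le q
    rw [Walk.length_cons] at hlen
    omega

end SimpleGraph

lemma Set.inter_nonempty_of_card_lt_ncard_add_ncard {α : Type*} [Finite α] {s t : Set α}
    (h : Nat.card α < s.ncard + t.ncard) : (s ∩ t).Nonempty := by
  by_contra hst
  rw [Set.not_nonempty_iff_eq_empty, ← Set.disjoint_iff_inter_eq_empty] at hst
  have := Set.ncard_le_card (s ∪ t)
  rw [Set.ncard_union_eq hst] at this
  omega

namespace IsTreeDecomp

variable {V ι : Type} {G : SimpleGraph V} {T : SimpleGraph ι} {bag : ι → Set V}

lemma mem_reachOutside_of_mem_bag (hD : IsTreeDecomp G T bag) {i j₀ j : ι} {v w : V}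
    (hv : v ∈ G.reachOutside (bag i) w) (hw : w ∈ bag j₀) (hvj : v ∈ bag j) :
    j ∈ T.reachOutside {i} j₀ := by
  have coherent : ∀ {a j₀ j}, a ∉ bag i → a ∈ bag j₀ → a ∈ bag j → j ∈ T.reachOutside {i} j₀ :=
    fun ha h₀ h => mem_reachOutside_of_induce_connected (hD.2.2.2 _)
      (Set.disjoint_singleton_right.2 ha) h₀ h
  obtain ⟨p, hp⟩ := hv
  induction p generalizing j₀ with
  | nil => exact coherent (hp _ (by simp)) hw hvj
  | cons hab q ih =>
    obtain ⟨j₁, ha, hb⟩ := hD.2.2.1 _ _ hab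
    refine mem_reachOutside_trans (coherent (hp _ (by simp)) hw ha) (ih hb hvj fun x hx => ?_)
    exact hp x (List.mem_cons_of_mem _ hx)

/-- The big component of `G - bag j` cannot meet `bag i`: its bags would then lie on both sides
of the tree edge `ij`. -/
lemma reachOutside_subset_of_adj [Fintype V] (hD : IsTreeDecomp G T bag) {i j x : ι} {w w' : V}
    (hij : T.Adj i j) (hbig : Fintype.card V < 2 * (G.reachOutside (bag i) w).ncard)
    (hbig' : Fintype.card V < 2 * (G.reachOutside (bag j) w').ncard)
    (hx : (bag x ∩ G.reachOutside (bag i) w).Nonempty) (hjx : x ∈ T.reachOutside {i} j) :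
    G.reachOutside (bag j) w' ⊆ G.reachOutside (bag i) w := by
  obtain ⟨v, hvi, hvj⟩ := Set.inter_nonempty_of_card_lt_ncard_add_ncard
    (s := G.reachOutside (bag i) w) (t := G.reachOutside (bag j) w')
    (by rw [Nat.card_eq_fintype_card]; omega)
  rw [← reachOutside_eq_of_mem hvi] at hx ⊢
  rw [← reachOutside_eq_of_mem hvj]
  obtain ⟨a, hax, hav⟩ := hx
  obtain ⟨y, hvy⟩ := hD.2.1 v
  have hyi : y ∈ T.reachOutside {i} j := by
    rw [← reachOutside_eq_of_mem hjx]
    exact hD.mem_reachOutside_of_mem_bag (mem_reachOutside_symm hav) hax hvy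
  refine reachOutside_subset_of_disjoint (Set.disjoint_right.2 fun u hui huj => ?_)
  have hyj : y ∈ T.reachOutside {j} i :=
    hD.mem_reachOutside_of_mem_bag (mem_reachOutside_symm huj) hui hvy
  exact Set.disjoint_left.1 (hD.1.isAcyclic.disjoint_reachOutside_of_adj hij) hyj hyi

lemma exists_lex_lt [Fintype V] (hD : IsTreeDecomp G T bag) (w : ι → V)
    (hbig : ∀ i, Fintype.card V < 2 * (G.reachOutside (bag i) (w i)).ncard) {i x : ι}
    (hx : (bag x ∩ G.reachOutside (bag i) (w i)).Nonempty) :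
    ∃ j y, (bag y ∩ G.reachOutside (bag j) (w j)).Nonempty ∧
      toLex ((G.reachOutside (bag j) (w j)).ncard, T.dist j y) <
        toLex ((G.reachOutside (bag i) (w i)).ncard, T.dist i x) := by
  have hne : i ≠ x := by
    rintro rfl
    obtain ⟨v, hvi, hv⟩ := hx
    exact notMem_of_mem_reachOutside hv hvi
  obtain ⟨j, hij, hjx, hdist⟩ := (hD.1.connected.preconnected i x).exists_adj_dist_lt hne
  have hsub := hD.reachOutside_subset_of_adj hij (hbig i) (hbig j) hx hjx
  by_cases heq : G.reachOutside (bag j) (w j) = G.reachOutside (bag i) (w i)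
  · exact ⟨j, x, heq ▸ hx, Prod.Lex.toLex_lt_toLex.2 (.inr ⟨by rw [heq], hdist⟩)⟩
  · obtain ⟨v, hv⟩ := Set.nonempty_of_ncard_ne_zero (s := G.reachOutside (bag j) (w j))
      (by have := hbig j; omega)
    obtain ⟨y, hvy⟩ := hD.2.1 v
    exact ⟨j, y, ⟨v, hvy, hv⟩, Prod.Lex.toLex_lt_toLex.2
      (.inl (Set.ncard_lt_ncard (hsub.ssubset_of_ne heq)))⟩

theorem exists_bag_balanced [Fintype V] (hD : IsTreeDecomp G T bag) :
    ∃ i, ∀ w, 2 * (G.reachOutside (bag i) w).ncard ≤ Fintype.card V := by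
  by_contra! hbig
  choose w hw using hbig
  obtain ⟨i₀⟩ := hD.1.connected.nonempty
  obtain ⟨v, hv⟩ := Set.nonempty_of_ncard_ne_zero (s := G.reachOutside (bag i₀) (w i₀))
    (by have := hw i₀; omega)
  obtain ⟨y, hvy⟩ := hD.2.1 v
  let μ : ι × ι → ℕ ×ₗ ℕ := fun p =>
    toLex ((G.reachOutside (bag p.1) (w p.1)).ncard, T.dist p.1 p.2)
  obtain ⟨⟨i, x⟩, hix, hmin⟩ := (InvImage.wf μ wellFounded_lt).has_min
    {p | (bag p.2 ∩ G.reachOutside (bag p.1) (w p.1)).Nonempty} ⟨(i₀, y), v, hvy, hv⟩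
  obtain ⟨j, z, hjz, hlt⟩ := hD.exists_lex_lt w hw hix
  exact hmin (j, z) hjz hlt

end IsTreeDecomp

theorem TreewidthAtMost.exists_balanced_separator {V : Type} [Fintype V] {G : SimpleGraph V}
    {k : ℕ} (htw : TreewidthAtMost G k) :
    ∃ X : Set V, X.ncard ≤ k + 1 ∧ ∀ w, 2 * (G.reachOutside X w).ncard ≤ Fintype.card V := by
  obtain ⟨ι, T, bag, hD, hbag⟩ := htw
  obtain ⟨i, hi⟩ := hD.exists_bag_balanced
  exact ⟨bag i, hbag i, hi⟩

lemma SimpleGraph.exists_closed_balanced_split {V : Type} [Fintype V] (G : SimpleGraph V)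
    (X : Set V) (hX : ∀ w, 2 * (G.reachOutside X w).ncard ≤ Fintype.card V) :
    ∃ L ⊆ Xᶜ, (∀ w ∈ L, G.reachOutside X w ⊆ L) ∧
      4 * L.ncard ≤ 3 * Fintype.card V ∧ 4 * (Xᶜ \ L).ncard ≤ 3 * Fintype.card V := by
  let admissible : Set (Set V) :=
    {L | L ⊆ Xᶜ ∧ (∀ w ∈ L, G.reachOutside X w ⊆ L) ∧ 4 * L.ncard ≤ 3 * Fintype.card V}
  obtain ⟨L, ⟨hLX, hLclosed, hL⟩, hmax⟩ :=
    Set.exists_max_image admissible Set.ncard (Set.toFinite _) ⟨∅, by simp [admissible]⟩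
  refine ⟨L, hLX, hLclosed, hL, ?_⟩
  by_contra hR
  obtain ⟨w, hwX, hwL⟩ := Set.nonempty_of_ncard_ne_zero (s := Xᶜ \ L) (by omega)
  set C := G.reachOutside X w
  have hCL : Disjoint L C := Set.disjoint_left.2 fun v hvL hvC =>
    hwL (hLclosed v hvL (mem_reachOutside_symm hvC))
  have hLC_closed : ∀ u ∈ L ∪ C, G.reachOutside X u ⊆ L ∪ C := by
    rintro u (hu | hu)
    · exact (hLclosed u hu).trans Set.subset_union_left
    · exact (reachOutside_eq_of_mem hu).subset.trans Set.subset_union_right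
  have hLC_X : L ∪ C ⊆ Xᶜ := Set.union_subset hLX fun _ => notMem_of_mem_reachOutside
  have hC_pos : 0 < C.ncard := (Set.ncard_pos).2 ⟨w, mem_reachOutside_self hwX⟩
  have hLC_big : 3 * Fintype.card V < 4 * (L ∪ C).ncard := by
    by_contra! h
    have := hmax (L ∪ C) ⟨hLC_X, hLC_closed, h⟩
    rw [Set.ncard_union_eq hCL] at this
    omega
  have hLR : L.ncard + (Xᶜ \ L).ncard ≤ Fintype.card V := by
    rw [← Set.ncard_union_eq Set.disjoint_sdiff_right, ← Nat.card_eq_fintype_card]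
    exact Set.ncard_le_card _
  rw [Set.ncard_union_eq hCL] at hLC_big
  have hC_small : 2 * C.ncard ≤ Fintype.card V := hX w
  omega

theorem statement13_general {V : Type} [Fintype V] (G : SimpleGraph V) (k : ℕ)
    (htw : TreewidthAtMost G k) :
    ∃ L X R : Set V,
      L ∪ X ∪ R = Set.univ ∧ Disjoint L X ∧ Disjoint L R ∧ Disjoint X R ∧
      (∀ u ∈ L, ∀ v ∈ R, ¬ G.Adj u v) ∧
      X.ncard ≤ k + 1 ∧
      9 * L.ncard ≤ 8 * Fintype.card V ∧
      9 * R.ncard ≤ 8 * Fintype.card V := by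
  obtain ⟨X, hXcard, hXbal⟩ := htw.exists_balanced_separator
  obtain ⟨L, hLX, hLclosed, hL, hR⟩ := G.exists_closed_balanced_split X hXbal
  refine ⟨L, X, Xᶜ \ L, ?_, Set.disjoint_left.2 fun _ hu => hLX hu, Set.disjoint_sdiff_right,
    Set.disjoint_left.2 fun _ hu hv => hv.1 hu, ?_, hXcard, by omega, by omega⟩
  · ext x
    by_cases hx : x ∈ X <;> by_cases hxL : x ∈ L <;> simp [hx, hxL]
  · intro u hu v hv huv
    have hvu : v ∈ G.reachOutside X u :=
      mem_reachOutside_of_adj (mem_reachOutside_self (hLX hu)) huv hv.1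
    exact hv.2 (hLclosed u hu hvu)

theorem statement13 {V : Type} [Fintype V] (G : SimpleGraph V) (k t : ℕ)
    (htw : TreewidthAtMost G k)
    (A1 B A2 : Set V)
    (hpart : A1 ∪ B ∪ A2 = Set.univ)
    (h1B : Disjoint A1 B) (h12 : Disjoint A1 A2) (hB2 : Disjoint B A2)
    (hedge : ∀ u ∈ A1, ∀ v ∈ A2, ¬ G.Adj u v)
    (hA1 : 4 * A1.ncard ≤ 3 * Fintype.card V)
    (hA2 : 4 * A2.ncard ≤ 3 * Fintype.card V)
    (hB : B.ncard ≤ t + 1)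
    (hn : 36 * (k + t + 2) ≤ Fintype.card V) :
    ∃ L X R : Set V,
      L ∪ X ∪ R = Set.univ ∧ Disjoint L X ∧ Disjoint L R ∧ Disjoint X R ∧
      (∀ u ∈ L, ∀ v ∈ R, ¬ G.Adj u v) ∧
      X.ncard ≤ k + 1 ∧
      9 * L.ncard ≤ 8 * Fintype.card V ∧
      9 * R.ncard ≤ 8 * Fintype.card V :=
  statement13_general G k htw
end
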